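/- arXiv:1910.02329 — 13 statements merged into one kernel-verified Lean document; each statement's English description precedes it below -/
import Mathlib

section
/- Let V : H → H be a monotone self-adjoint bounded linear operator on a real Hilbert space H. Then ran V is closed if and only if there exists α > 0 such that ⟨Vx, x⟩ ≥ α‖x‖² for all x ∈ ran V. -/
/-!
Restricted to `(ker V)ᗮ`, `V` is injective with the same range, so by the open mapping theorem its
range is closed iff `c ‖x‖ ≤ ‖V x‖` on `(ker V)ᗮ` for some `c > 0`. For self-adjoint `V` the space
`(ker V)ᗮ` is the closure of `ran V`, so such a bound on `(ker V)ᗮ` is the same as one on `ran V`.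
Finally, for positive `V` the Cauchy–Schwarz inequality for the form `⟪V x, y⟫` gives
`‖V x‖² ≤ ‖V‖ ⟪V x, x⟫`, which makes the bound `c ‖x‖ ≤ ‖V x‖` equivalent to `α ‖x‖² ≤ ⟪V x, x⟫`.
-/

namespace ContinuousLinearMap

open RCLike
open scoped InnerProductSpace

variable {𝕜 E F : Type*} [RCLike 𝕜] [NormedAddCommGroup E] [InnerProductSpace 𝕜 E]
  [NormedAddCommGroup F] [NormedSpace 𝕜 F]

theorem IsPositive.re_inner_sq_le {T : E →L[𝕜] E} (hT : T.IsPositive) (x y : E) :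
    re ⟪T x, y⟫_𝕜 ^ 2 ≤ re ⟪T x, x⟫_𝕜 * re ⟪T y, y⟫_𝕜 := by
  have hquad : ∀ t : ℝ,
      0 ≤ re ⟪T y, y⟫_𝕜 * (t * t) + 2 * re ⟪T x, y⟫_𝕜 * t + re ⟪T x, x⟫_𝕜 := by
    intro t
    have hsymm : re ⟪T y, x⟫_𝕜 = re ⟪T x, y⟫_𝕜 := by
      rw [hT.inner_left_eq_inner_right, inner_re_symm]
    have hnonneg := hT.re_inner_nonneg_left (x + (t : 𝕜) • y)
    simp only [map_add, map_smul, inner_add_left, inner_add_right, inner_smul_left,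
      inner_smul_right, conj_ofReal, re_ofReal_mul, hsymm] at hnonneg
    linarith
  have hdiscrim := discrim_le_zero hquad
  rw [discrim] at hdiscrim
  nlinarith

theorem IsPositive.norm_apply_sq_le {T : E →L[𝕜] E} (hT : T.IsPositive) (x : E) :
    ‖T x‖ ^ 2 ≤ ‖T‖ * re ⟪T x, x⟫_𝕜 := by
  have hcs := hT.re_inner_sq_le x (T x)
  rw [inner_self_eq_norm_sq] at hcs
  have hTTx : re ⟪T (T x), T x⟫_𝕜 ≤ ‖T‖ * ‖T x‖ ^ 2 :=
    calc re ⟪T (T x), T x⟫_𝕜 ≤ ‖T (T x)‖ * ‖T x‖ := re_inner_le_norm _ _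
      _ ≤ ‖T‖ * ‖T x‖ * ‖T x‖ := by gcongr; exact T.le_opNorm _
      _ = ‖T‖ * ‖T x‖ ^ 2 := by ring
  rcases (sq_nonneg ‖T x‖).eq_or_lt with hzero | hpos
  · rw [← hzero]; exact mul_nonneg (norm_nonneg _) (hT.re_inner_nonneg_left x)
  · have := mul_le_mul_of_nonneg_left hTTx (hT.re_inner_nonneg_left x)
    nlinarith

theorem IsPositive.exists_mul_norm_le_iff_exists_mul_sq_le_re_inner {T : E →L[𝕜] E}
    (hT : T.IsPositive) (s : Set E) :
    (∃ c > 0, ∀ x ∈ s, c * ‖x‖ ≤ ‖T x‖) ↔ ∃ α > 0, ∀ x ∈ s, α * ‖x‖ ^ 2 ≤ re ⟪T x, x⟫_𝕜 := by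
  constructor
  · rintro ⟨c, hc, hbound⟩
    refine ⟨c ^ 2 / (‖T‖ + 1), by positivity, fun x hx => ?_⟩
    have hnonneg := hT.re_inner_nonneg_left x
    calc c ^ 2 / (‖T‖ + 1) * ‖x‖ ^ 2 = (c * ‖x‖) ^ 2 / (‖T‖ + 1) := by ring
      _ ≤ ‖T‖ * re ⟪T x, x⟫_𝕜 / (‖T‖ + 1) := by
        gcongr
        exact (pow_le_pow_left₀ (by positivity) (hbound x hx) 2).trans (hT.norm_apply_sq_le x)
      _ ≤ re ⟪T x, x⟫_𝕜 := by
        rw [div_le_iff₀ (by positivity)]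
        nlinarith
  · rintro ⟨α, hα, hbound⟩
    refine ⟨α, hα, fun x hx => ?_⟩
    rcases (norm_nonneg x).eq_or_lt with hzero | hpos
    · rw [← hzero, mul_zero]; exact norm_nonneg _
    · have h := (hbound x hx).trans (re_inner_le_norm (T x) x)
      rw [sq, ← mul_assoc] at h
      exact le_of_mul_le_mul_right h hpos

theorem range_comp_subtypeL_orthogonal_ker [CompleteSpace E] (T : E →L[𝕜] F) :
    Set.range (T ∘L T.kerᗮ.subtypeL) = Set.range T := by
  refine Set.Subset.antisymm (by rintro _ ⟨x, rfl⟩; exact ⟨x, rfl⟩) ?_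
  rintro _ ⟨x, rfl⟩
  have hx : x - T.ker.starProjection x ∈ T.kerᗮ := T.ker.sub_starProjection_mem_orthogonal x
  refine ⟨⟨_, hx⟩, ?_⟩
  have hker : T (T.ker.starProjection x) = 0 := T.ker.starProjection_apply_mem x
  change T (x - _) = T x
  rw [map_sub, hker, sub_zero]

theorem injective_comp_subtypeL_orthogonal_ker (T : E →L[𝕜] F) :
    Function.Injective (T ∘L T.kerᗮ.subtypeL) := by
  rw [injective_iff_map_eq_zero]
  rintro ⟨x, hx⟩ hTx
  have hx' : x ∈ T.ker ⊓ T.kerᗮ := ⟨hTx, hx⟩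
  rw [Submodule.inf_orthogonal_eq_bot] at hx'
  simpa using hx'

theorem isClosed_range_iff_exists_mul_norm_le_of_mem_orthogonal_ker [CompleteSpace E]
    [CompleteSpace F] (T : E →L[𝕜] F) :
    IsClosed (Set.range T) ↔ ∃ c > 0, ∀ x ∈ T.kerᗮ, c * ‖x‖ ≤ ‖T x‖ := by
  rw [← range_comp_subtypeL_orthogonal_ker,
    isClosed_range_iff_antilipschitz_of_injective _ (injective_comp_subtypeL_orthogonal_ker T),
    antilipschitzWith_iff_exists_mul_le_norm]
  simp only [Subtype.forall]
  rfl

theorem _root_.IsSelfAdjoint.orthogonal_ker [CompleteSpace E] {T : E →L[𝕜] E}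
    (hT : IsSelfAdjoint T) :
    T.kerᗮ = T.range.topologicalClosure := by
  rw [T.orthogonal_ker, hT.adjoint_eq]

theorem _root_.IsSelfAdjoint.isClosed_range_iff [CompleteSpace E] {T : E →L[𝕜] E}
    (hT : IsSelfAdjoint T) :
    IsClosed (Set.range T) ↔ ∃ c > 0, ∀ x ∈ Set.range T, c * ‖x‖ ≤ ‖T x‖ := by
  rw [isClosed_range_iff_exists_mul_norm_le_of_mem_orthogonal_ker, hT.orthogonal_ker]
  refine exists_congr fun c => and_congr_right fun _ =>
    ⟨fun h x hx => h x (subset_closure hx), fun h x hx => ?_⟩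
  have hclosed : IsClosed {x : E | c * ‖x‖ ≤ ‖T x‖} := isClosed_le (by fun_prop) (by fun_prop)
  rw [← SetLike.mem_coe, Submodule.topologicalClosure_coe] at hx
  exact closure_minimal h hclosed hx

end ContinuousLinearMap

open RealInnerProductSpace

theorem stmt_0 {H : Type*} [NormedAddCommGroup H] [InnerProductSpace ℝ H] [CompleteSpace H]
    (V : H →L[ℝ] H)
    (hsa : ∀ x y : H, ⟪V x, y⟫ = ⟪x, V y⟫)
    (hmono : ∀ x : H, 0 ≤ ⟪V x, x⟫) :
    IsClosed (Set.range V) ↔ ∃ α > (0:ℝ), ∀ x ∈ Set.range V, α * ‖x‖ ^ 2 ≤ ⟪V x, x⟫ := by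
  have hV : V.IsPositive := (V.isPositive_iff).2 ⟨hsa, hmono⟩
  rw [hV.isSelfAdjoint.isClosed_range_iff, hV.exists_mul_norm_le_iff_exists_mul_sq_le_re_inner]
  simp only [RCLike.re_to_real]
end

section
/- Let V : H → H be a monotone self-adjoint bounded linear operator with closed range. Then ran V, equipped with the inner product (x,y) ↦ ⟨x, Vy⟩, is a real Hilbert space (i.e., this bilinear form is a complete inner product on ran V). -/
/-!
On `ran V` the form `⟪x, V x⟫` is equivalent to `‖x‖²`, so both claims are inherited from the
norm. The upper bound `⟪x, V x⟫ ≤ ‖V‖ ‖x‖²` is clear. For the lower bound, Cauchy–Schwarz for the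
semidefinite form `⟪x, V y⟫`, taken at `y = V x`, gives `‖V x‖² ≤ ‖V‖ ⟪x, V x⟫`; and `V` is
bounded below on `ran V` by the open mapping theorem, because `ker V = (ran V)ᗮ` makes `V`
injective on `ran V` and maps `ran V` onto the closed subspace `ran V`.
-/

open RealInnerProductSpace NNReal Filter Topology

namespace LinearMap.IsSymmetric

variable {𝕜 F : Type*} [RCLike 𝕜] [NormedAddCommGroup F] [InnerProductSpace 𝕜 F]
  {S : F →ₗ[𝕜] F}

theorem range_inf_ker_eq_bot (hS : S.IsSymmetric) :
    LinearMap.range S ⊓ LinearMap.ker S = ⊥ :=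
  hS.orthogonal_range ▸ (LinearMap.range S).inf_orthogonal_eq_bot

theorem exists_mem_range_map_eq (hS : S.IsSymmetric)
    [(LinearMap.range S).HasOrthogonalProjection] (y : F) :
    ∃ x ∈ LinearMap.range S, S x = S y := by
  obtain ⟨x, hx, z, hz, rfl⟩ := (LinearMap.range S).exists_add_mem_mem_orthogonal y
  rw [hS.orthogonal_range, LinearMap.mem_ker] at hz
  exact ⟨x, hx, by rw [map_add, hz, add_zero]⟩

end LinearMap.IsSymmetric

namespace ContinuousLinearMap

variable {E : Type*} [NormedAddCommGroup E] [InnerProductSpace ℝ E] {T : E →L[ℝ] E}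

theorem IsPositive.norm_map_sq_le (hT : T.IsPositive) (x : E) :
    ‖T x‖ ^ 2 ≤ ‖T‖ * ⟪x, T x⟫ := by
  have hsymm : ⟪x, T (T x)⟫ = ‖T x‖ ^ 2 := by
    rw [← hT.inner_left_eq_inner_right, real_inner_self_eq_norm_sq]
  have hcs := LinearMap.BilinForm.apply_mul_apply_le_of_forall_zero_le
    ((innerₗ E).compl₂ (T : E →ₗ[ℝ] E)) hT.inner_nonneg_right x (T x)
  simp only [LinearMap.compl₂_apply, innerₗ_apply_apply, coe_coe, hsymm,
    real_inner_self_eq_norm_sq] at hcs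
  have hle : ⟪T x, T (T x)⟫ ≤ ‖T‖ * ‖T x‖ ^ 2 := by
    calc ⟪T x, T (T x)⟫ ≤ ‖T x‖ * ‖T (T x)‖ := real_inner_le_norm _ _
      _ ≤ ‖T x‖ * (‖T‖ * ‖T x‖) := by gcongr; exact T.le_opNorm _
      _ = ‖T‖ * ‖T x‖ ^ 2 := by ring
  rcases (sq_nonneg ‖T x‖).eq_or_lt with h | h
  · rw [← h]; exact mul_nonneg (norm_nonneg T) (hT.inner_nonneg_right x)
  · refine le_of_mul_le_mul_right ?_ h
    calc ‖T x‖ ^ 2 * ‖T x‖ ^ 2 ≤ ⟪x, T x⟫ * ⟪T x, T (T x)⟫ := hcs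
      _ ≤ ⟪x, T x⟫ * (‖T‖ * ‖T x‖ ^ 2) := by gcongr; exact hT.inner_nonneg_right x
      _ = ‖T‖ * ⟪x, T x⟫ * ‖T x‖ ^ 2 := by ring

theorem exists_norm_le_mul_norm_map_of_isClosed_range [CompleteSpace E]
    (hT : T.IsSymmetric) (hclosed : IsClosed (Set.range T)) :
    ∃ C : ℝ≥0, ∀ x ∈ Set.range T, ‖x‖ ≤ C * ‖T x‖ := by
  set K := LinearMap.range (T : E →ₗ[ℝ] E)
  have : CompleteSpace K := hclosed.completeSpace_coe
  set f := T.comp K.subtypeL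
  have hinj : Function.Injective f := by
    refine (injective_iff_map_eq_zero f).2 fun x hx => Subtype.ext ?_
    have hmem : (x : E) ∈ K ⊓ LinearMap.ker (T : E →ₗ[ℝ] E) := ⟨x.2, hx⟩
    rwa [hT.range_inf_ker_eq_bot, Submodule.mem_bot] at hmem
  have hrange : Set.range f = Set.range T := by
    refine (Set.range_comp_subset_range K.subtype T).antisymm ?_
    rintro _ ⟨y, rfl⟩
    obtain ⟨x, hx, hxy⟩ := hT.exists_mem_range_map_eq y
    exact ⟨⟨x, hx⟩, hxy⟩
  obtain ⟨C, hC⟩ := f.antilipschitz_of_injective_of_isClosed_range hinj (hrange ▸ hclosed)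
  exact ⟨C, fun x hx => ZeroHomClass.bound_of_antilipschitz f hC ⟨x, hx⟩⟩

theorem IsPositive.eq_zero_of_mem_range_of_inner_map_self_eq_zero (hT : T.IsPositive) {x : E}
    (hx : x ∈ Set.range T) (hx0 : ⟪x, T x⟫ = 0) : x = 0 := by
  have hTx : T x = 0 := by simpa [hx0] using hT.norm_map_sq_le x
  have hmem : x ∈ LinearMap.range (T : E →ₗ[ℝ] E) ⊓ LinearMap.ker (T : E →ₗ[ℝ] E) := ⟨hx, hTx⟩
  rwa [hT.isSymmetric.range_inf_ker_eq_bot, Submodule.mem_bot] at hmem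

theorem IsPositive.exists_norm_sq_le_mul_inner_of_isClosed_range [CompleteSpace E]
    (hT : T.IsPositive) (hclosed : IsClosed (Set.range T)) :
    ∃ D : ℝ≥0, ∀ x ∈ Set.range T, ‖x‖ ^ 2 ≤ D * ⟪x, T x⟫ := by
  obtain ⟨C, hC⟩ := exists_norm_le_mul_norm_map_of_isClosed_range hT.isSymmetric hclosed
  refine ⟨C ^ 2 * ‖T‖₊, fun x hx => ?_⟩
  calc ‖x‖ ^ 2 ≤ (C * ‖T x‖) ^ 2 := by gcongr; exact hC x hx
    _ = C ^ 2 * ‖T x‖ ^ 2 := mul_pow _ _ _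
    _ ≤ C ^ 2 * (‖T‖ * ⟪x, T x⟫) := by gcongr; exact hT.norm_map_sq_le x
    _ = _ := by push_cast; ring

end ContinuousLinearMap

/-- The range of a monotone self-adjoint bounded linear operator with closed range,
equipped with `(x, y) ↦ ⟪x, V y⟫`, is a real Hilbert space: the form is positive
definite on `ran V` (bilinearity and symmetry being automatic), and `ran V` is
complete with respect to the induced norm. -/
theorem stmt_1 {H : Type*} [NormedAddCommGroup H] [InnerProductSpace ℝ H] [CompleteSpace H]
    (V : H →L[ℝ] H)
    (hsa : ∀ x y : H, ⟪V x, y⟫ = ⟪x, V y⟫)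
    (hmono : ∀ x : H, 0 ≤ ⟪V x, x⟫)
    (hclosed : IsClosed (Set.range V)) :
    (∀ x ∈ Set.range V, ⟪x, V x⟫ = 0 → x = 0) ∧
    (∀ u : ℕ → H, (∀ n, u n ∈ Set.range V) →
      (∀ ε > (0:ℝ), ∃ N, ∀ m ≥ N, ∀ n ≥ N, ⟪u m - u n, V (u m - u n)⟫ < ε) →
      ∃ x ∈ Set.range V, ∀ ε > (0:ℝ), ∃ N, ∀ n ≥ N, ⟪u n - x, V (u n - x)⟫ < ε) := by
  have hV : V.IsPositive := (V.isPositive_iff).2 ⟨hsa, hmono⟩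
  refine ⟨fun x => hV.eq_zero_of_mem_range_of_inner_map_self_eq_zero, fun u hu hcauchy => ?_⟩
  obtain ⟨D, hD⟩ := hV.exists_norm_sq_le_mul_inner_of_isClosed_range hclosed
  have hu_cauchy : CauchySeq u := by
    refine Metric.cauchySeq_iff.2 fun ε hε => ?_
    obtain ⟨N, hN⟩ := hcauchy (ε ^ 2 / (D + 1)) (by positivity)
    refine ⟨N, fun m hm n hn => lt_of_pow_lt_pow_left₀ 2 hε.le ?_⟩
    have hmn : u m - u n ∈ Set.range V :=
      (LinearMap.range (V : H →ₗ[ℝ] H)).sub_mem (hu m) (hu n)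
    calc dist (u m) (u n) ^ 2 = ‖u m - u n‖ ^ 2 := by rw [dist_eq_norm]
      _ ≤ D * ⟪u m - u n, V (u m - u n)⟫ := hD _ hmn
      _ ≤ (D + 1) * ⟪u m - u n, V (u m - u n)⟫ :=
        mul_le_mul_of_nonneg_right (by linarith) (hV.inner_nonneg_right _)
      _ < (D + 1) * (ε ^ 2 / (D + 1)) := by gcongr; exact hN m hm n hn
      _ = ε ^ 2 := by field_simp
  obtain ⟨x, hx⟩ := cauchySeq_tendsto_of_complete hu_cauchy
  refine ⟨x, hclosed.mem_of_tendsto hx (.of_forall hu), fun ε hε => ?_⟩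
  have hsub : Tendsto (fun n => u n - x) atTop (𝓝 0) := tendsto_sub_nhds_zero_iff.2 hx
  have hform : Tendsto (fun n => ⟪u n - x, V (u n - x)⟫) atTop (𝓝 0) := by
    simpa using hsub.inner (𝕜 := ℝ) ((V.continuous.tendsto' 0 0 (map_zero V)).comp hsub)
  exact eventually_atTop.1 (hform.eventually_lt_const hε)
end

section
/- Let V : H → H be a monotone self-adjoint bounded linear operator with closed range, let S : H → H satisfy Fix S ≠ ∅ and S = S ∘ P, where P is the orthogonal projection onto ran V, and suppose T := (P ∘ S)|ran V is quasinonexpansive on ran V with respect to the norm ‖x‖_V = √⟨x,Vx⟩. Then for any x₀ ∈ H and λₙ ∈ [ε, 2−ε] with T firmly quasinonexpansive in (ran V, ⟨·,·⟩_V), the sequence xₙ₊₁ = (1−λₙ)xₙ + λₙ S xₙ has the property that (P xₙ) is Fejér monotone with respect to Fix T in the norm ‖·‖_V. -/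
open RealInnerProductSpace

/-- Fejér monotonicity (in the `V`-metric) of the shadows of Krasnosel'skiĭ–Mann
iterates on the range of a monotone self-adjoint bounded linear operator `V`
with closed range, for a firmly quasinonexpansive operator `T = (P ∘ S)|_{ran V}`. -/
theorem stmt_4 {H : Type*} [NormedAddCommGroup H] [InnerProductSpace ℝ H] [CompleteSpace H]
    (V : H →L[ℝ] H)
    (hsa : ∀ x y : H, ⟪V x, y⟫ = ⟪x, V y⟫)
    (hmono : ∀ x : H, 0 ≤ ⟪V x, x⟫)
    (hclosed : IsClosed (Set.range V))
    (P : H →L[ℝ] H)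
    (hPmem : ∀ x, P x ∈ Set.range V)
    (hPfix : ∀ x ∈ Set.range V, P x = x)
    (hPorth : ∀ x : H, ∀ w ∈ Set.range V, ⟪x - P x, w⟫ = 0)
    (S : H → H) (hfixS : ∃ x, S x = x) (hSP : ∀ x, S (P x) = S x)
    (FixT : Set H)
    (hFixT : FixT = {z | z ∈ Set.range V ∧ P (S z) = z})
    (hfqne : ∀ z ∈ Set.range V, ∀ y ∈ FixT,
      ⟪P (S z) - y, V (P (S z) - y)⟫
        ≤ ⟪z - y, V (z - y)⟫ - ⟪P (S z) - z, V (P (S z) - z)⟫)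
    (ε : ℝ) (hε : 0 < ε) (hε1 : ε < 1)
    (lam : ℕ → ℝ) (hlam : ∀ n, lam n ∈ Set.Icc ε (2 - ε))
    (x : ℕ → H)
    (hrec : ∀ n, x (n + 1) = (1 - lam n) • x n + lam n • S (x n)) :
    ∀ c ∈ FixT, ∀ n,
      Real.sqrt ⟪P (x (n + 1)) - c, V (P (x (n + 1)) - c)⟫
        ≤ Real.sqrt ⟪P (x n) - c, V (P (x n) - c)⟫ := by
  intro c hc n
  -- symmetry of the bilinear form
  have hsym : ∀ u d : H, ⟪d, V u⟫ = ⟪u, V d⟫ := by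
    intro u d
    rw [real_inner_comm, hsa]
  have hpos : ∀ u : H, 0 ≤ ⟪u, V u⟫ := by
    intro u
    rw [← real_inner_comm]
    exact hmono u
  -- expansion of the quadratic form
  have hexp : ∀ (u d : H) (t : ℝ),
      ⟪u + t • d, V (u + t • d)⟫ = ⟪u, V u⟫ + 2 * t * ⟪u, V d⟫ + t ^ 2 * ⟪d, V d⟫ := by
    intro u d t
    simp only [map_add, map_smul, inner_add_left, inner_add_right, real_inner_smul_left,
      real_inner_smul_right, hsym d u]
    ring
  set yn := P (x n) with hyn
  have hynV : yn ∈ Set.range V := hPmem _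
  set u := yn - c with hu
  set d := P (S yn) - yn with hd
  -- express the next shadow
  have hstep : P (x (n + 1)) - c = u + lam n • d := by
    rw [hrec, map_add, map_smul, map_smul, ← hSP]
    simp only [hu, hd, ← hyn]
    module
  -- firm quasinonexpansiveness gives the key inner product bound
  have hkey : ⟪u, V d⟫ ≤ -⟪d, V d⟫ := by
    have h := hfqne yn hynV c hc
    have h1 : P (S yn) - c = u + (1 : ℝ) • d := by
      simp only [hu, hd]; module
    rw [h1, hexp] at h
    have h2 : ⟪P (S yn) - yn, V (P (S yn) - yn)⟫ = ⟪d, V d⟫ := by rw [hd]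
    rw [h2] at h
    nlinarith
  obtain ⟨hl1, hl2⟩ := hlam n
  have hdpos := hpos d
  have hfin : ⟪P (x (n + 1)) - c, V (P (x (n + 1)) - c)⟫ ≤ ⟪u, V u⟫ := by
    rw [hstep, hexp]
    nlinarith [hkey, hdpos, mul_nonneg (hε.le.trans hl1) hdpos,
      mul_nonneg (mul_nonneg (hε.le.trans hl1) (hε.le.trans hl1)) hdpos]
  exact Real.sqrt_le_sqrt hfin
end

section
/- Under the hypotheses of the Krasnosel'skiĭ–Mann iteration on the range of V with T firmly quasinonexpansive in (ran V, ⟨·,·⟩_V), Id − T demiclosed at 0 in (ran V, ⟨·,·⟩_V), and λₙ ∈ [ε, 2−ε], the shadow sequence (P_{ran V} xₙ) converges weakly in (ran V, ⟨·,·⟩_V) to some x̂ ∈ Fix T, and S x̂ ∈ Fix S. -/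
/-!
Since `S = S ∘ P`, the shadows `zₙ = P xₙ` follow the relaxed iteration
`zₙ₊₁ = (1 - λₙ) zₙ + λₙ T zₙ`. Firm quasinonexpansiveness makes them Fejér monotone with respect
to `Fix T` for the seminorm `u ↦ √⟪u, V u⟫`, each step decreasing the squared distance by at least
`ε² ⟪zₙ - T zₙ, V (zₙ - T zₙ)⟫`, so the residuals tend to `0`. As `‖V u‖² ≤ ‖V‖ ⟪u, V u⟫`, the
sequence `V zₙ` is bounded and has weakly convergent subsequences; their limits lie in `ran V`,
and demiclosedness puts the corresponding points of `ran V` in `Fix T`. Opial's argument then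
shows that there is only one such cluster point: for two of them `p`, `q`, the Fejér limits force
`⟪zₙ, V (q - p)⟫` to converge, so `⟪q - p, V (q - p)⟫ = 0`, and `V` is injective on its range.
-/

open RealInnerProductSpace Filter Topology
open scoped InnerProductSpace

section WeakCompactness

variable {𝕜 H : Type*} [RCLike 𝕜] [NormedAddCommGroup H] [InnerProductSpace 𝕜 H]

variable (𝕜) in
def WeakTendsto (y : ℕ → H) (p : H) : Prop :=
  ∀ u, Tendsto (fun n => ⟪y n, u⟫_𝕜) atTop (𝓝 ⟪p, u⟫_𝕜)

theorem exists_strictMono_weakTendsto [CompleteSpace H] {y : ℕ → H} {B : ℝ}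
    (hB : ∀ n, ‖y n‖ ≤ B) : ∃ p : H, ∃ φ : ℕ → ℕ, StrictMono φ ∧ WeakTendsto 𝕜 (y ∘ φ) p := by
  -- Sequential Banach–Alaoglu on the separable closed span `K` of the sequence, Riesz on `K`,
  -- and the orthogonal projection onto `K` to test against all of `H`.
  set K := (Submodule.span 𝕜 (Set.range y)).topologicalClosure
  have hyK : ∀ n, y n ∈ K := fun n =>
    Submodule.le_topologicalClosure _ (Submodule.subset_span ⟨n, rfl⟩)
  have : TopologicalSpace.SeparableSpace K :=
    (Set.countable_range y).isSeparable.span.closure.separableSpace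
  let f : ℕ → WeakDual 𝕜 K := fun n => (innerSL 𝕜 (y n)).comp K.subtypeL
  have hf : ∀ n, f n ∈ WeakDual.toStrongDual ⁻¹' Metric.closedBall 0 B := by
    intro n
    refine mem_closedBall_zero_iff.2 (((innerSL 𝕜 (y n)).opNorm_comp_le K.subtypeL).trans ?_)
    rw [innerSL_apply_norm]
    exact (mul_le_of_le_one_right (norm_nonneg _) K.norm_subtypeL_le).trans (hB n)
  obtain ⟨a, -, φ, hφ, ha⟩ := WeakDual.isSeqCompact_closedBall 𝕜 K 0 B hf
  refine ⟨(InnerProductSpace.toDual 𝕜 K).symm (WeakDual.toStrongDual a), φ, hφ, fun u => ?_⟩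
  have key := ((WeakDual.eval_continuous (K.orthogonalProjectionOnto u)).tendsto a).comp ha
  have hlhs : ∀ n, ⟪y n, u⟫_𝕜 = f n (K.orthogonalProjectionOnto u) := fun n =>
    (Submodule.inner_orthogonalProjectionOnto_eq_of_mem_left ⟨y n, hyK n⟩ u).symm
  rw [← Submodule.inner_orthogonalProjectionOnto_eq_of_mem_left,
    InnerProductSpace.toDual_symm_apply]
  exact key.congr fun n => (hlhs (φ n)).symm

end WeakCompactness

theorem tendsto_zero_of_forall_succ_le_sub {a r : ℕ → ℝ} {c : ℝ} (hc : 0 < c)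
    (ha : ∀ n, 0 ≤ a n) (hr : ∀ n, 0 ≤ r n) (h : ∀ n, a (n + 1) ≤ a n - c * r n) :
    Tendsto r atTop (𝓝 0) := by
  have hanti : Antitone a := antitone_nat_of_succ_le fun n => by nlinarith [h n, hr n]
  obtain ⟨L, hL⟩ : ∃ L, Tendsto a atTop (𝓝 L) :=
    ⟨_, tendsto_atTop_ciInf hanti ⟨0, by rintro _ ⟨n, rfl⟩; exact ha n⟩⟩
  have hdiff : Tendsto (fun n => (a n - a (n + 1)) / c) atTop (𝓝 0) := by
    simpa using ((hL.sub (hL.comp (tendsto_add_atTop_nat 1))).div_const c)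
  refine squeeze_zero hr (fun n => ?_) hdiff
  rw [le_div_iff₀ hc]
  linarith [h n]

section

variable {H : Type*} [NormedAddCommGroup H] [InnerProductSpace ℝ H] {V : H →L[ℝ] H}

theorem LinearMap.IsSymmetric.inner_add_apply_add (hV : V.IsSymmetric) (u v : H) :
    ⟪u + v, V (u + v)⟫ = ⟪u, V u⟫ + 2 * ⟪u, V v⟫ + ⟪v, V v⟫ := by
  have : ⟪v, V u⟫ = ⟪u, V v⟫ := by rw [real_inner_comm]; exact hV u v
  rw [map_add, inner_add_left, inner_add_right, inner_add_right, this]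
  ring

theorem LinearMap.IsSymmetric.apply_eq_zero_of_forall_inner_range (hV : V.IsSymmetric) {u : H}
    (hu : ∀ w ∈ Set.range V, ⟪u, w⟫ = 0) : V u = 0 := by
  rw [← inner_self_eq_zero (𝕜 := ℝ)]
  exact (hV u (V u)).trans (hu _ ⟨V u, rfl⟩)

theorem LinearMap.IsSymmetric.eq_zero_of_mem_range_of_apply_eq_zero (hV : V.IsSymmetric) {u : H}
    (hu : u ∈ Set.range V) (hVu : V u = 0) : u = 0 := by
  obtain ⟨e, rfl⟩ := hu
  rw [← inner_self_eq_zero (𝕜 := ℝ)]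
  simpa [hVu] using hV e (V e)

namespace ContinuousLinearMap.IsPositive

theorem inner_apply_sq_le (hV : V.IsPositive) (u v : H) :
    ⟪u, V v⟫ ^ 2 ≤ ⟪u, V u⟫ * ⟪v, V v⟫ := by
  have hquad : ∀ t : ℝ, 0 ≤ ⟪v, V v⟫ * (t * t) + 2 * ⟪u, V v⟫ * t + ⟪u, V u⟫ := fun t => by
    have := hV.isSymmetric.inner_add_apply_add u (t • v)
    simp only [map_smul, inner_smul_left, inner_smul_right, RCLike.conj_to_real] at this
    nlinarith [this, hV.inner_nonneg_right (u + t • v)]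
  have := discrim_le_zero hquad
  rw [discrim] at this
  nlinarith

theorem norm_apply_sq_le_s5 (hV : V.IsPositive) (u : H) : ‖V u‖ ^ 2 ≤ ‖V‖ * ⟪u, V u⟫ := by
  have hcs := hV.inner_apply_sq_le u (V u)
  rw [← hV.inner_left_eq_inner_right, real_inner_self_eq_norm_sq] at hcs
  have hle : ⟪V u, V (V u)⟫ ≤ ‖V‖ * ‖V u‖ ^ 2 := by
    calc ⟪V u, V (V u)⟫ ≤ ‖V u‖ * ‖V (V u)‖ := real_inner_le_norm _ _
      _ ≤ ‖V u‖ * (‖V‖ * ‖V u‖) := by gcongr; exact V.le_opNorm _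
      _ = ‖V‖ * ‖V u‖ ^ 2 := by ring
  rcases (sq_nonneg ‖V u‖).eq_or_lt with h0 | hpos
  · rw [← h0]
    exact mul_nonneg (norm_nonneg V) (hV.inner_nonneg_right u)
  · nlinarith [hV.inner_nonneg_right u]

end ContinuousLinearMap.IsPositive

theorem mem_of_weakTendsto {R : Set H} {P : H → H} (hPmem : ∀ x, P x ∈ R)
    (hPorth : ∀ x, ∀ w ∈ R, ⟪x - P x, w⟫ = 0) {y : ℕ → H} {q : H} (hy : ∀ n, y n ∈ R)
    (hq : WeakTendsto ℝ y q) : q ∈ R := by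
  have h₁ : ⟪q, q - P q⟫ = 0 := by
    refine tendsto_nhds_unique (hq (q - P q)) ?_
    simp only [real_inner_comm (q - P q), hPorth q _ (hy _)]
    exact tendsto_const_nhds
  have h₂ : ⟪P q, q - P q⟫ = 0 := by rw [real_inner_comm]; exact hPorth q _ (hPmem q)
  have : q - P q = 0 := by rw [← inner_self_eq_zero (𝕜 := ℝ), inner_sub_left, h₁, h₂, sub_zero]
  rw [sub_eq_zero.1 this]
  exact hPmem q

theorem LinearMap.IsSymmetric.tendsto_inner_sub_apply (hV : V.IsSymmetric) {z : ℕ → H} {p : H}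
    (hz : WeakTendsto ℝ (fun n => V (z n)) (V p)) (w : H) :
    Tendsto (fun n => ⟪z n - p, V w⟫) atTop (𝓝 0) := by
  have := (hz w).sub_const ⟪V p, w⟫
  simp only [sub_self, ← inner_sub_left, ← map_sub] at this
  exact this.congr fun n => hV _ w

theorem LinearMap.IsSymmetric.inner_relaxation_sub_le (hV : V.IsSymmetric) {z Tz y : H} {t : ℝ}
    (ht : 0 ≤ t)
    (hT : ⟪Tz - y, V (Tz - y)⟫ ≤ ⟪z - y, V (z - y)⟫ - ⟪Tz - z, V (Tz - z)⟫) :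
    ⟪(1 - t) • z + t • Tz - y, V ((1 - t) • z + t • Tz - y)⟫ ≤
      ⟪z - y, V (z - y)⟫ - t * (2 - t) * ⟪Tz - z, V (Tz - z)⟫ := by
  rw [show Tz - y = (z - y) + (Tz - z) by abel, hV.inner_add_apply_add] at hT
  rw [show (1 - t) • z + t • Tz - y = (z - y) + t • (Tz - z) by module, hV.inner_add_apply_add]
  simp only [map_smul, inner_smul_left, inner_smul_right, RCLike.conj_to_real]
  nlinarith

theorem ContinuousLinearMap.IsPositive.inner_succ_sub_le_of_relaxation (hV : V.IsPositive)
    {T : H → H} {F : Set H} {z : ℕ → H} {lam : ℕ → ℝ} {ε : ℝ} (hε : 0 ≤ ε)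
    (hlam : ∀ n, lam n ∈ Set.Icc ε (2 - ε))
    (hz : ∀ n, z (n + 1) = (1 - lam n) • z n + lam n • T (z n))
    (hT : ∀ n, ∀ y ∈ F,
      ⟪T (z n) - y, V (T (z n) - y)⟫ ≤ ⟪z n - y, V (z n - y)⟫ - ⟪T (z n) - z n, V (T (z n) - z n)⟫)
    {y : H} (hy : y ∈ F) (n : ℕ) :
    ⟪z (n + 1) - y, V (z (n + 1) - y)⟫ ≤
      ⟪z n - y, V (z n - y)⟫ - ε ^ 2 * ⟪z n - T (z n), V (z n - T (z n))⟫ := by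
  obtain ⟨hε₁, hε₂⟩ := hlam n
  have hlam_sq : ε ^ 2 ≤ lam n * (2 - lam n) := by
    rw [sq]; exact mul_le_mul hε₁ (by linarith) hε (by linarith)
  rw [← neg_sub (T (z n)), map_neg, inner_neg_neg, hz n]
  refine (hV.isSymmetric.inner_relaxation_sub_le (hε.trans hε₁) (hT n y hy)).trans ?_
  gcongr
  exact hV.inner_nonneg_right _

theorem ContinuousLinearMap.IsPositive.eq_of_weakTendsto_apply (hV : V.IsPositive)
    {z : ℕ → H} {p q : H} (hp : p ∈ Set.range V) (hq : q ∈ Set.range V) {Lp Lq : ℝ}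
    (hLp : Tendsto (fun n => ⟪z n - p, V (z n - p)⟫) atTop (𝓝 Lp))
    (hLq : Tendsto (fun n => ⟪z n - q, V (z n - q)⟫) atTop (𝓝 Lq))
    {φ ψ : ℕ → ℕ} (hφ : Tendsto φ atTop atTop) (hψ : Tendsto ψ atTop atTop)
    (hzp : WeakTendsto ℝ (fun n => V (z (φ n))) (V p))
    (hzq : WeakTendsto ℝ (fun n => V (z (ψ n))) (V q)) : p = q := by
  set Q := ⟪q - p, V (q - p)⟫
  have hsplit : ∀ n, ⟪z n - q, V (q - p)⟫ =
      (⟪z n - p, V (z n - p)⟫ - ⟪z n - q, V (z n - q)⟫ - Q) / 2 := fun n => by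
    rw [show z n - p = (z n - q) + (q - p) by abel, hV.isSymmetric.inner_add_apply_add]
    ring
  have hlim : Tendsto (fun n => ⟪z n - q, V (q - p)⟫) atTop (𝓝 ((Lp - Lq - Q) / 2)) := by
    simpa only [hsplit] using ((hLp.sub hLq).sub_const Q).div_const 2
  have hφlim : Tendsto (fun n => ⟪z (φ n) - q, V (q - p)⟫) atTop (𝓝 (0 - Q)) := by
    refine (hV.isSymmetric.tendsto_inner_sub_apply hzp (q - p)).sub_const Q |>.congr fun n => ?_
    rw [← inner_sub_left]
    congr 1
    abel
  have hψlim := hV.isSymmetric.tendsto_inner_sub_apply hzq (q - p)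
  have hQ : Q = 0 := by
    linarith [tendsto_nhds_unique (hlim.comp hφ) hφlim, tendsto_nhds_unique (hlim.comp hψ) hψlim]
  have hVqp : V (q - p) = 0 := by
    have : ‖V (q - p)‖ ^ 2 ≤ ‖V‖ * Q := hV.norm_apply_sq_le_s5 (q - p)
    rw [hQ, mul_zero] at this
    exact norm_eq_zero.1 (pow_eq_zero_iff two_ne_zero |>.1 (le_antisymm this (sq_nonneg _)))
  obtain ⟨a, rfl⟩ := hp
  obtain ⟨b, rfl⟩ := hq
  have := hV.isSymmetric.eq_zero_of_mem_range_of_apply_eq_zero ⟨b - a, map_sub V b a⟩ hVqp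
  exact (sub_eq_zero.1 this).symm

end

section

variable {H : Type*} [NormedAddCommGroup H] [InnerProductSpace ℝ H] [CompleteSpace H]
  {V : H →L[ℝ] H}

theorem LinearMap.IsSymmetric.exists_weakTendsto_apply_comp (hV : V.IsSymmetric) {P : H → H}
    (hPmem : ∀ x, P x ∈ Set.range V) (hPorth : ∀ x, ∀ w ∈ Set.range V, ⟪x - P x, w⟫ = 0)
    {z : ℕ → H} {B : ℝ} (hB : ∀ n, ‖V (z n)‖ ≤ B) :
    ∃ p ∈ Set.range V, ∃ φ : ℕ → ℕ, StrictMono φ ∧ WeakTendsto ℝ (fun n => V (z (φ n))) (V p) := by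
  obtain ⟨q, φ, hφ, hq⟩ := exists_strictMono_weakTendsto (𝕜 := ℝ) hB
  obtain ⟨a, rfl⟩ := mem_of_weakTendsto hPmem hPorth (fun n => ⟨z (φ n), rfl⟩) hq
  have hVP : V (P a) = V a := by
    rw [← sub_eq_zero, ← map_sub, ← neg_sub, map_neg, neg_eq_zero]
    exact hV.apply_eq_zero_of_forall_inner_range (hPorth a)
  exact ⟨P a, hPmem a, φ, hφ, hVP ▸ hq⟩

theorem ContinuousLinearMap.IsPositive.exists_mem_weakTendsto_apply (hV : V.IsPositive)
    {P : H → H} (hPmem : ∀ x, P x ∈ Set.range V)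
    (hPorth : ∀ x, ∀ w ∈ Set.range V, ⟪x - P x, w⟫ = 0) {F : Set H} (hF : F ⊆ Set.range V)
    {y₀ : H} (hy₀ : y₀ ∈ F) {z : ℕ → H}
    (hfejer : ∀ y ∈ F, Antitone fun n => ⟪z n - y, V (z n - y)⟫)
    (hclust : ∀ φ : ℕ → ℕ, Tendsto φ atTop atTop → ∀ p ∈ Set.range V,
      WeakTendsto ℝ (fun n => V (z (φ n))) (V p) → p ∈ F) :
    ∃ x ∈ F, WeakTendsto ℝ (fun n => V (z n)) (V x) := by
  have hconv : ∀ y ∈ F, ∃ L, Tendsto (fun n => ⟪z n - y, V (z n - y)⟫) atTop (𝓝 L) :=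
    fun y hy => ⟨_, tendsto_atTop_ciInf (hfejer y hy)
      ⟨0, by rintro _ ⟨n, rfl⟩; exact hV.inner_nonneg_right _⟩⟩
  have hbound : ∀ n, ‖V (z n)‖ ≤ √(‖V‖ * ⟪z 0 - y₀, V (z 0 - y₀)⟫) + ‖V y₀‖ := fun n => by
    have hsq := (hV.norm_apply_sq_le_s5 (z n - y₀)).trans (mul_le_mul_of_nonneg_left
      (hfejer y₀ hy₀ n.zero_le) (norm_nonneg V))
    calc ‖V (z n)‖ ≤ ‖V (z n - y₀)‖ + ‖V y₀‖ := by
          simpa using norm_add_le (V (z n - y₀)) (V y₀)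
      _ ≤ _ := by gcongr; exact Real.le_sqrt_of_sq_le hsq
  have hsub : ∀ ns : ℕ → ℕ, Tendsto ns atTop atTop → ∃ p ∈ F, ∃ φ : ℕ → ℕ,
      Tendsto φ atTop atTop ∧ WeakTendsto ℝ (fun n => V (z (ns (φ n)))) (V p) := by
    intro ns hns
    obtain ⟨p, hp, φ, hφ, hzp⟩ :=
      hV.isSymmetric.exists_weakTendsto_apply_comp hPmem hPorth fun n => hbound (ns n)
    exact ⟨p, hclust _ (hns.comp hφ.tendsto_atTop) p hp hzp, φ, hφ.tendsto_atTop, hzp⟩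
  obtain ⟨x, hx, φ, hφ, hzx⟩ := hsub id tendsto_id
  refine ⟨x, hx, fun u => tendsto_of_subseq_tendsto fun ns hns => ?_⟩
  obtain ⟨p, hp, ψ, hψ, hzp⟩ := hsub ns hns
  obtain ⟨Lp, hLp⟩ := hconv p hp
  obtain ⟨Lx, hLx⟩ := hconv x hx
  obtain rfl := hV.eq_of_weakTendsto_apply (hF hp) (hF hx) hLp hLx (hns.comp hψ) hφ hzp hzx
  exact ⟨ψ, hzp u⟩

end

theorem stmt_5_general {H : Type*} [NormedAddCommGroup H] [InnerProductSpace ℝ H] [CompleteSpace H]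
    (V : H →L[ℝ] H)
    (hsa : ∀ x y : H, ⟪V x, y⟫ = ⟪x, V y⟫)
    (hmono : ∀ x : H, 0 ≤ ⟪V x, x⟫)
    (P : H →L[ℝ] H)
    (hPmem : ∀ x, P x ∈ Set.range V)
    (hPorth : ∀ x : H, ∀ w ∈ Set.range V, ⟪x - P x, w⟫ = 0)
    (S : H → H) (hfixS : ∃ x, S x = x) (hSP : ∀ x, S (P x) = S x)
    (FixT : Set H)
    (hFixT : FixT = {z | z ∈ Set.range V ∧ P (S z) = z})
    (hfqne : ∀ z ∈ Set.range V, ∀ y ∈ FixT,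
      ⟪P (S z) - y, V (P (S z) - y)⟫
        ≤ ⟪z - y, V (z - y)⟫ - ⟪P (S z) - z, V (P (S z) - z)⟫)
    (hdemi : ∀ (z : ℕ → H) (zl : H), (∀ n, z n ∈ Set.range V) → zl ∈ Set.range V →
      (∀ w ∈ Set.range V, Tendsto (fun n => ⟪z n - zl, V w⟫) atTop (𝓝 0)) →
      Tendsto (fun n => ⟪z n - P (S (z n)), V (z n - P (S (z n)))⟫) atTop (𝓝 0) →
      P (S zl) = zl)
    (ε : ℝ) (hε : 0 < ε)
    (lam : ℕ → ℝ) (hlam : ∀ n, lam n ∈ Set.Icc ε (2 - ε))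
    (x : ℕ → H)
    (hrec : ∀ n, x (n + 1) = (1 - lam n) • x n + lam n • S (x n)) :
    ∃ xh ∈ FixT,
      (∀ w ∈ Set.range V, Tendsto (fun n => ⟪P (x n) - xh, V w⟫) atTop (𝓝 0)) ∧
      S (S xh) = S xh := by
  have hV : V.IsPositive := (V.isPositive_iff).2 ⟨hsa, hmono⟩
  have hFixT_range : FixT ⊆ Set.range V := by rw [hFixT]; exact fun _ h => h.1
  have hshadow (n : ℕ) : P (x (n + 1)) = (1 - lam n) • P (x n) + lam n • P (S (P (x n))) := by
    rw [hrec n, map_add, map_smul, map_smul, hSP]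
  have hfejer (y : H) (hy : y ∈ FixT) :=
    hV.inner_succ_sub_le_of_relaxation (T := fun u => P (S u)) hε.le hlam hshadow
      (fun n => hfqne _ (hPmem (x n))) hy
  obtain ⟨x₀, hx₀⟩ := hfixS
  have hPx₀ : P x₀ ∈ FixT := by rw [hFixT]; exact ⟨hPmem x₀, by rw [hSP, hx₀]⟩
  have hresidual : Tendsto (fun n => ⟪P (x n) - P (S (P (x n))), V (P (x n) - P (S (P (x n))))⟫)
      atTop (𝓝 0) :=
    tendsto_zero_of_forall_succ_le_sub (a := fun n => ⟪P (x n) - P x₀, V (P (x n) - P x₀)⟫)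
      (pow_pos hε 2) (fun _ => hV.inner_nonneg_right _) (fun _ => hV.inner_nonneg_right _)
      (hfejer _ hPx₀)
  obtain ⟨xh, hxh, hweak⟩ := hV.exists_mem_weakTendsto_apply (z := fun n => P (x n))
    hPmem hPorth hFixT_range hPx₀
    (fun y hy => antitone_nat_of_succ_le fun n =>
      (hfejer y hy n).trans (sub_le_self _ (mul_nonneg (sq_nonneg ε) (hV.inner_nonneg_right _))))
    (fun φ hφ p hp hzp => hFixT ▸ ⟨hp, hdemi _ p (fun n => hPmem _) hp
      (fun w _ => hV.isSymmetric.tendsto_inner_sub_apply hzp w) (hresidual.comp hφ)⟩)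
  refine ⟨xh, hxh, fun w _ => hV.isSymmetric.tendsto_inner_sub_apply hweak w, ?_⟩
  rw [← hSP (S xh), (hFixT ▸ hxh : xh ∈ {z | z ∈ Set.range V ∧ P (S z) = z}).2]

/-- Weak convergence in `(ran V, ⟪·,·⟫_V)` of the shadow sequence of the
Krasnosel'skiĭ–Mann iteration, when `T = (P ∘ S)|_{ran V}` is firmly
quasinonexpansive, `Id − T` is demiclosed at `0`, and `λₙ ∈ [ε, 2−ε]`:
the shadows `P xₙ` converge weakly to some `x̂ ∈ Fix T`, and `S x̂ ∈ Fix S`. -/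
theorem stmt_5 {H : Type*} [NormedAddCommGroup H] [InnerProductSpace ℝ H] [CompleteSpace H]
    (V : H →L[ℝ] H)
    (hsa : ∀ x y : H, ⟪V x, y⟫ = ⟪x, V y⟫)
    (hmono : ∀ x : H, 0 ≤ ⟪V x, x⟫)
    (hclosed : IsClosed (Set.range V))
    (P : H →L[ℝ] H)
    (hPmem : ∀ x, P x ∈ Set.range V)
    (hPfix : ∀ x ∈ Set.range V, P x = x)
    (hPorth : ∀ x : H, ∀ w ∈ Set.range V, ⟪x - P x, w⟫ = 0)
    (S : H → H) (hfixS : ∃ x, S x = x) (hSP : ∀ x, S (P x) = S x)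
    (FixT : Set H)
    (hFixT : FixT = {z | z ∈ Set.range V ∧ P (S z) = z})
    (hfqne : ∀ z ∈ Set.range V, ∀ y ∈ FixT,
      ⟪P (S z) - y, V (P (S z) - y)⟫
        ≤ ⟪z - y, V (z - y)⟫ - ⟪P (S z) - z, V (P (S z) - z)⟫)
    (hdemi : ∀ (z : ℕ → H) (zl : H), (∀ n, z n ∈ Set.range V) → zl ∈ Set.range V →
      (∀ w ∈ Set.range V, Tendsto (fun n => ⟪z n - zl, V w⟫) atTop (𝓝 0)) →
      Tendsto (fun n => ⟪z n - P (S (z n)), V (z n - P (S (z n)))⟫) atTop (𝓝 0) →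
      P (S zl) = zl)
    (ε : ℝ) (hε : 0 < ε) (hε1 : ε < 1)
    (lam : ℕ → ℝ) (hlam : ∀ n, lam n ∈ Set.Icc ε (2 - ε))
    (x : ℕ → H)
    (hrec : ∀ n, x (n + 1) = (1 - lam n) • x n + lam n • S (x n)) :
    ∃ xh ∈ FixT,
      (∀ w ∈ Set.range V, Tendsto (fun n => ⟪P (x n) - xh, V w⟫) atTop (𝓝 0)) ∧
      S (S xh) = S xh :=
  stmt_5_general V hsa hmono P hPmem hPorth S hfixS hSP FixT hFixT hfqne hdemi ε hε lam hlam x hrec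
end

section
/- Let Σ : G → G and Υ : H → H be strongly monotone self-adjoint bounded linear operators with strong monotonicity constants σ and τ respectively, let L : H → G be bounded linear, and define V : H × G → H × G by V(x,u) = (Υ⁻¹x − L*u, Σ⁻¹u − Lx). Then V is a bounded self-adjoint linear operator, and if ‖√Σ L √Υ‖ ≤ 1, V is (τσ/(τ+σ))-cocoercive (in particular monotone). -/
open RealInnerProductSpace

/-- The pair `(x, u)` regarded as an element of the Hilbert direct sum `H ⊕ G`. -/
noncomputable def pd {H G : Type*} (x : H) (u : G) : WithLp 2 (H × G) :=
  (WithLp.equiv 2 (H × G)).symm (x, u)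

/-!
Write `x = √Υ p` and `u = √Σ q`, so that `⟪Υ⁻¹ x, x⟫ = ‖p‖²` and `⟪Σ⁻¹ u, u⟫ = ‖q‖²`. Since
`⟪L x, u⟫ = ⟪√Σ L √Υ p, q⟫`, the hypothesis `‖√Σ L √Υ‖ ≤ 1` gives `|⟪L x, u⟫| ≤ ‖p‖ ‖q‖`, so the
quadratic form `⟪V (x, u), (x, u)⟫ = ‖p‖² + ‖q‖² - 2 ⟪L x, u⟫` lies between `(‖p‖ - ‖q‖)²` and
`(‖p‖ + ‖q‖)²`. Thus `V` is positive, and strong monotonicity (`τ ‖p‖² ≤ ‖x‖²`, `σ ‖q‖² ≤ ‖u‖²`)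
bounds the form by `(1/τ + 1/σ) ‖(x, u)‖²`. For a positive operator with `⟪V z, z⟫ ≤ c ‖z‖²`,
Cauchy–Schwarz for the semi-inner product `⟪V ·, ·⟫` yields `‖V z‖² ≤ c ⟪V z, z⟫`.
-/

theorem LinearMap.IsSymmetric.of_rightInverse {𝕜 E : Type*} [RCLike 𝕜] [NormedAddCommGroup E]
    [InnerProductSpace 𝕜 E] {A B : E →ₗ[𝕜] E} (hA : A.IsSymmetric)
    (hAB : Function.RightInverse B A) : B.IsSymmetric := fun x y => by
  conv_lhs => rw [← hAB y]
  conv_rhs => rw [← hAB x]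
  exact hA (B x) (B y) |>.symm

section RealInnerProductSpace

variable {E F G : Type*} [NormedAddCommGroup E] [InnerProductSpace ℝ E]
  [NormedAddCommGroup F] [InnerProductSpace ℝ F] [NormedAddCommGroup G] [InnerProductSpace ℝ G]

theorem mul_div_add_mul_add_sq_le {τ σ : ℝ} (hτ : 0 < τ) (hσ : 0 < σ) (s t : ℝ) :
    τ * σ / (τ + σ) * (s + t) ^ 2 ≤ τ * s ^ 2 + σ * t ^ 2 := by
  rw [div_mul_eq_mul_div, div_le_iff₀ (by positivity)]
  nlinarith [sq_nonneg (τ * s - σ * t)]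

theorem mul_inner_apply_self_le_of_rightInverse {A B : E → E} {τ : ℝ} (hτ : 0 ≤ τ)
    (hA : ∀ y, τ * ‖y‖ ^ 2 ≤ ⟪A y, y⟫) (hAB : Function.RightInverse B A) (x : E) :
    τ * ⟪B x, x⟫ ≤ ‖x‖ ^ 2 := by
  have h : τ * ‖B x‖ ^ 2 ≤ ‖x‖ * ‖B x‖ := by
    have hmono := hA (B x)
    rw [hAB x] at hmono
    exact hmono.trans (real_inner_le_norm x (B x))
  nlinarith [real_inner_le_norm (B x) x, sq_nonneg (‖x‖ - τ * ‖B x‖),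
    mul_le_mul_of_nonneg_left h hτ]

theorem LinearMap.IsSymmetric.inner_apply_self_eq_norm_sq {S : E →L[ℝ] E} {P : E → E}
    (hS : (S : E →ₗ[ℝ] E).IsSymmetric)
    (hSP : ∀ x, S (S (P x)) = x) (x : E) : ⟪P x, x⟫ = ‖S (P x)‖ ^ 2 := by
  calc ⟪P x, x⟫ = ⟪P x, S (S (P x))⟫ := by rw [hSP]
    _ = ‖S (P x)‖ ^ 2 := by rw [← hS.apply_clm, real_inner_self_eq_norm_sq]

theorem abs_inner_apply_apply_le_norm_comp_mul {S : E →L[ℝ] F} {L : F →L[ℝ] G} {T : G →L[ℝ] G}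
    (hT : (T : G →ₗ[ℝ] G).IsSymmetric) (p : E) (q : G) :
    |⟪L (S p), T q⟫| ≤ ‖T.comp (L.comp S)‖ * ‖p‖ * ‖q‖ := by
  rw [← hT.apply_clm]
  calc |⟪T.comp (L.comp S) p, q⟫| ≤ ‖T.comp (L.comp S) p‖ * ‖q‖ := abs_real_inner_le_norm _ _
    _ ≤ ‖T.comp (L.comp S)‖ * ‖p‖ * ‖q‖ := by gcongr; exact ContinuousLinearMap.le_opNorm _ _

theorem LinearMap.IsPositive.mul_norm_sq_apply_le {T : E →ₗ[ℝ] E} (hT : T.IsPositive) {β : ℝ}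
    (hβ : ∀ z, β * ⟪T z, z⟫ ≤ ‖z‖ ^ 2) (z : E) : β * ‖T z‖ ^ 2 ≤ ⟪T z, z⟫ := by
  have hcs : ‖T z‖ ^ 2 * ‖T z‖ ^ 2 ≤ ⟪T z, z⟫ * ⟪T (T z), T z⟫ := by
    have := LinearMap.BilinForm.apply_mul_apply_le_of_forall_zero_le ((innerₗ E).comp T)
      hT.inner_nonneg_left z (T z)
    simpa only [LinearMap.comp_apply, innerₗ_apply_apply, hT.isSymmetric (T z) z,
      real_inner_self_eq_norm_sq] using this
  have hpos := hT.inner_nonneg_left z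
  rcases le_or_gt β 0 with hβ0 | hβ0
  · nlinarith [sq_nonneg ‖T z‖]
  rcases (sq_nonneg ‖T z‖).eq_or_lt with h0 | h0
  · simpa [← h0] using hpos
  refine le_of_mul_le_mul_right ?_ h0
  calc β * ‖T z‖ ^ 2 * ‖T z‖ ^ 2 ≤ ⟪T z, z⟫ * (β * ⟪T (T z), T z⟫) := by nlinarith
    _ ≤ ⟪T z, z⟫ * ‖T z‖ ^ 2 := mul_le_mul_of_nonneg_left (hβ (T z)) hpos

end RealInnerProductSpace

theorem exists_pd_eq {H G : Type*} (z : WithLp 2 (H × G)) : ∃ x u, pd x u = z :=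
  ⟨z.ofLp.1, z.ofLp.2, rfl⟩

theorem norm_pd_sq {H G : Type*} [NormedAddCommGroup H] [NormedAddCommGroup G] (x : H) (u : G) :
    ‖pd x u‖ ^ 2 = ‖x‖ ^ 2 + ‖u‖ ^ 2 :=
  WithLp.prod_norm_sq_eq_of_L2 _

section PrimalDual

variable {H G : Type*} [NormedAddCommGroup H] [InnerProductSpace ℝ H]
  [NormedAddCommGroup G] [InnerProductSpace ℝ G]

-- `P`, `S` play the roles of `Υ⁻¹`, `√Υ`, and `Q`, `T` those of `Σ⁻¹`, `√Σ`.
variable {P S : H →L[ℝ] H} {Q T : G →L[ℝ] G} {L : H →L[ℝ] G}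

theorem inner_pd_pd (x y : H) (u v : G) : ⟪pd x u, pd y v⟫ = ⟪x, y⟫ + ⟪u, v⟫ := rfl

theorem inner_add_inner_sub_two_mul_inner_mem_Icc
    (hS : (S : H →ₗ[ℝ] H).IsSymmetric) (hSP : ∀ x, S (S (P x)) = x)
    (hT : (T : G →ₗ[ℝ] G).IsSymmetric) (hTQ : ∀ u, T (T (Q u)) = u)
    (hM : ‖T.comp (L.comp S)‖ ≤ 1) (x : H) (u : G) :
    ⟪P x, x⟫ + ⟪Q u, u⟫ - 2 * ⟪L x, u⟫ ∈
      Set.Icc ((‖S (P x)‖ - ‖T (Q u)‖) ^ 2) ((‖S (P x)‖ + ‖T (Q u)‖) ^ 2) := by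
  have hcross : |⟪L x, u⟫| ≤ ‖S (P x)‖ * ‖T (Q u)‖ := by
    conv_lhs => rw [← hSP x, ← hTQ u]
    grw [abs_inner_apply_apply_le_norm_comp_mul hT, hM, one_mul]
  rw [hS.inner_apply_self_eq_norm_sq hSP, hT.inner_apply_self_eq_norm_sq hTQ]
  constructor <;> nlinarith [abs_le.mp hcross]

variable [CompleteSpace H] [CompleteSpace G] {V : WithLp 2 (H × G) →L[ℝ] WithLp 2 (H × G)}

theorem isSymmetric_of_apply_pd
    (hV : ∀ x u, V (pd x u) = pd (P x - ContinuousLinearMap.adjoint L u) (Q u - L x))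
    (hP : (P : H →ₗ[ℝ] H).IsSymmetric) (hQ : (Q : G →ₗ[ℝ] G).IsSymmetric) :
    (V : WithLp 2 (H × G) →ₗ[ℝ] WithLp 2 (H × G)).IsSymmetric := by
  intro z w
  obtain ⟨x, u, rfl⟩ := exists_pd_eq z
  obtain ⟨y, v, rfl⟩ := exists_pd_eq w
  simp only [ContinuousLinearMap.coe_coe, hV, inner_pd_pd, inner_sub_left, inner_sub_right,
    ContinuousLinearMap.adjoint_inner_left, ContinuousLinearMap.adjoint_inner_right, hP.apply_clm,
    hQ.apply_clm]
  ring

theorem inner_apply_pd_self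
    (hV : ∀ x u, V (pd x u) = pd (P x - ContinuousLinearMap.adjoint L u) (Q u - L x))
    (x : H) (u : G) : ⟪V (pd x u), pd x u⟫ = ⟪P x, x⟫ + ⟪Q u, u⟫ - 2 * ⟪L x, u⟫ := by
  rw [hV, inner_pd_pd, inner_sub_left, inner_sub_left, ContinuousLinearMap.adjoint_inner_left,
    real_inner_comm u (L x)]
  ring

theorem inner_apply_self_nonneg_of_apply_pd
    (hV : ∀ x u, V (pd x u) = pd (P x - ContinuousLinearMap.adjoint L u) (Q u - L x))
    (hS : (S : H →ₗ[ℝ] H).IsSymmetric) (hSP : ∀ x, S (S (P x)) = x)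
    (hT : (T : G →ₗ[ℝ] G).IsSymmetric) (hTQ : ∀ u, T (T (Q u)) = u)
    (hM : ‖T.comp (L.comp S)‖ ≤ 1) (z : WithLp 2 (H × G)) : 0 ≤ ⟪V z, z⟫ := by
  obtain ⟨x, u, rfl⟩ := exists_pd_eq z
  rw [inner_apply_pd_self hV]
  exact (sq_nonneg _).trans (inner_add_inner_sub_two_mul_inner_mem_Icc hS hSP hT hTQ hM x u).1

theorem mul_inner_apply_self_le_of_apply_pd
    (hV : ∀ x u, V (pd x u) = pd (P x - ContinuousLinearMap.adjoint L u) (Q u - L x))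
    {τ σ : ℝ} (hτ : 0 < τ) (hσ : 0 < σ)
    (hP : ∀ x, τ * ⟪P x, x⟫ ≤ ‖x‖ ^ 2) (hQ : ∀ u, σ * ⟪Q u, u⟫ ≤ ‖u‖ ^ 2)
    (hS : (S : H →ₗ[ℝ] H).IsSymmetric) (hSP : ∀ x, S (S (P x)) = x)
    (hT : (T : G →ₗ[ℝ] G).IsSymmetric) (hTQ : ∀ u, T (T (Q u)) = u)
    (hM : ‖T.comp (L.comp S)‖ ≤ 1) (z : WithLp 2 (H × G)) :
    τ * σ / (τ + σ) * ⟪V z, z⟫ ≤ ‖z‖ ^ 2 := by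
  obtain ⟨x, u, rfl⟩ := exists_pd_eq z
  have hx := hP x
  have hu := hQ u
  rw [hS.inner_apply_self_eq_norm_sq hSP] at hx
  rw [hT.inner_apply_self_eq_norm_sq hTQ] at hu
  calc τ * σ / (τ + σ) * ⟪V (pd x u), pd x u⟫
      ≤ τ * σ / (τ + σ) * (‖S (P x)‖ + ‖T (Q u)‖) ^ 2 := by
        rw [inner_apply_pd_self hV]
        gcongr
        exact (inner_add_inner_sub_two_mul_inner_mem_Icc hS hSP hT hTQ hM x u).2
    _ ≤ τ * ‖S (P x)‖ ^ 2 + σ * ‖T (Q u)‖ ^ 2 := mul_div_add_mul_add_sq_le hτ hσ _ _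
    _ ≤ ‖pd x u‖ ^ 2 := by rw [norm_pd_sq]; exact add_le_add hx hu

end PrimalDual

/-- The primal-dual operator `V : (x,u) ↦ (Υ⁻¹x − L*u, Σ⁻¹u − Lx)` is a bounded
self-adjoint linear operator, and if `‖√Σ L √Υ‖ ≤ 1` it is `τσ/(τ+σ)`-cocoercive
(in particular monotone). -/
theorem stmt_6 {H G : Type*} [NormedAddCommGroup H] [InnerProductSpace ℝ H] [CompleteSpace H]
    [NormedAddCommGroup G] [InnerProductSpace ℝ G] [CompleteSpace G]
    (Ups UpsI sUps : H →L[ℝ] H) (Sg SgI sSg : G →L[ℝ] G) (L : H →L[ℝ] G)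
    (τ σ : ℝ) (hτ : 0 < τ) (hσ : 0 < σ)
    (hUsa : ∀ x y : H, ⟪Ups x, y⟫ = ⟪x, Ups y⟫)
    (hUsm : ∀ x : H, τ * ‖x‖ ^ 2 ≤ ⟪Ups x, x⟫)
    (hSsa : ∀ u v : G, ⟪Sg u, v⟫ = ⟪u, Sg v⟫)
    (hSsm : ∀ u : G, σ * ‖u‖ ^ 2 ≤ ⟪Sg u, u⟫)
    (hUinv : Ups.comp UpsI = ContinuousLinearMap.id ℝ H ∧
      UpsI.comp Ups = ContinuousLinearMap.id ℝ H)
    (hSinv : Sg.comp SgI = ContinuousLinearMap.id ℝ G ∧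
      SgI.comp Sg = ContinuousLinearMap.id ℝ G)
    (hsU : (∀ x y : H, ⟪sUps x, y⟫ = ⟪x, sUps y⟫) ∧ (∀ x : H, 0 ≤ ⟪sUps x, x⟫) ∧
      sUps.comp sUps = Ups)
    (hsS : (∀ u v : G, ⟪sSg u, v⟫ = ⟪u, sSg v⟫) ∧ (∀ u : G, 0 ≤ ⟪sSg u, u⟫) ∧
      sSg.comp sSg = Sg)
    (V : WithLp 2 (H × G) →L[ℝ] WithLp 2 (H × G))
    (hV : ∀ (x : H) (u : G),
      V (pd x u) = pd (UpsI x - ContinuousLinearMap.adjoint L u) (SgI u - L x)) :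
    (∀ z w : WithLp 2 (H × G), ⟪V z, w⟫ = ⟪z, V w⟫) ∧
    (‖sSg.comp (L.comp sUps)‖ ≤ 1 →
      ((∀ z : WithLp 2 (H × G), 0 ≤ ⟪V z, z⟫) ∧
       ∀ z w : WithLp 2 (H × G),
         (τ * σ / (τ + σ)) * ‖V z - V w‖ ^ 2 ≤ ⟪V z - V w, z - w⟫)) := by
  have hUpsI : Function.RightInverse UpsI Ups := ContinuousLinearMap.ext_iff.mp hUinv.1
  have hSgI : Function.RightInverse SgI Sg := ContinuousLinearMap.ext_iff.mp hSinv.1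
  have hsUps : ∀ x, sUps (sUps (UpsI x)) = x := fun x => by
    rw [← ContinuousLinearMap.comp_apply, hsU.2.2, hUpsI]
  have hsSg : ∀ u, sSg (sSg (SgI u)) = u := fun u => by
    rw [← ContinuousLinearMap.comp_apply, hsS.2.2, hSgI]
  have hVsymm := isSymmetric_of_apply_pd hV (LinearMap.IsSymmetric.of_rightInverse hUsa hUpsI)
    (LinearMap.IsSymmetric.of_rightInverse hSsa hSgI)
  refine ⟨hVsymm, fun hM => ?_⟩
  have hVpos : (V : WithLp 2 (H × G) →ₗ[ℝ] WithLp 2 (H × G)).IsPositive :=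
    (LinearMap.isPositive_iff _).2
      ⟨hVsymm, inner_apply_self_nonneg_of_apply_pd hV hsU.1 hsUps hsS.1 hsSg hM⟩
  have hVbound := mul_inner_apply_self_le_of_apply_pd hV hτ hσ
    (mul_inner_apply_self_le_of_rightInverse hτ.le hUsm hUpsI)
    (mul_inner_apply_self_le_of_rightInverse hσ.le hSsm hSgI) hsU.1 hsUps hsS.1 hsSg hM
  refine ⟨hVpos.inner_nonneg_left, fun z w => ?_⟩
  simpa only [ContinuousLinearMap.coe_coe, map_sub] using hVpos.mul_norm_sq_apply_le hVbound (z - w)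
end

section
/- With V(x,u) = (Υ⁻¹x − L*u, Σ⁻¹u − Lx) as above, the following are equivalent: (i) ran V is closed in H ⊕ G; (ii) ran(Σ⁻¹ − L Υ L*) is closed in G; (iii) ran(Υ⁻¹ − L* Σ L) is closed in H. -/
open RealInnerProductSpace

section Aux

variable {H G : Type*} [NormedAddCommGroup H] [NormedSpace ℝ H]
  [NormedAddCommGroup G] [NormedSpace ℝ G]

lemma aux_closed_univ_prod (s : Set G) :
    IsClosed ((Set.univ : Set H) ×ˢ s) ↔ IsClosed s := by
  constructor
  · intro h
    have hs : s = (fun u : G => ((0 : H), u)) ⁻¹' ((Set.univ : Set H) ×ˢ s) := by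
      ext u; simp
    rw [hs]
    exact h.preimage (continuous_const.prodMk continuous_id)
  · exact fun h => isClosed_univ.prod h

lemma aux_closed_prod_univ (s : Set H) :
    IsClosed (s ×ˢ (Set.univ : Set G)) ↔ IsClosed s := by
  constructor
  · intro h
    have hs : s = (fun x : H => (x, (0 : G))) ⁻¹' (s ×ˢ (Set.univ : Set G)) := by
      ext x; simp
    rw [hs]
    exact h.preimage (continuous_id.prodMk continuous_const)
  · exact fun h => h.prod isClosed_univ

lemma aux_range_comp_equiv {E F : Type*} [NormedAddCommGroup E] [NormedSpace ℝ E]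
    [NormedAddCommGroup F] [NormedSpace ℝ F]
    (A : F ≃L[ℝ] F) (f : E → F) :
    IsClosed (Set.range (fun x => A (f x))) ↔ IsClosed (Set.range f) := by
  have : Set.range (fun x => A (f x)) = A.toHomeomorph '' Set.range f := by
    ext z
    simp [Set.range_comp, ContinuousLinearEquiv.coe_toHomeomorph]
  rw [this, A.toHomeomorph.isClosed_image]

end Aux

/-- With `V(x,u) = (Υ⁻¹x − L*u, Σ⁻¹u − Lx)`, the following are equivalent:
(i) `ran V` is closed in `H ⊕ G`; (ii) `ran (Σ⁻¹ − LΥL*)` is closed in `G`;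
(iii) `ran (Υ⁻¹ − L*ΣL)` is closed in `H`. -/
theorem stmt_7 {H G : Type*} [NormedAddCommGroup H] [InnerProductSpace ℝ H] [CompleteSpace H]
    [NormedAddCommGroup G] [InnerProductSpace ℝ G] [CompleteSpace G]
    (Ups UpsI sUps : H →L[ℝ] H) (Sg SgI sSg : G →L[ℝ] G) (L : H →L[ℝ] G)
    (τ σ : ℝ) (hτ : 0 < τ) (hσ : 0 < σ)
    (hUsa : ∀ x y : H, ⟪Ups x, y⟫ = ⟪x, Ups y⟫)
    (hUsm : ∀ x : H, τ * ‖x‖ ^ 2 ≤ ⟪Ups x, x⟫)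
    (hSsa : ∀ u v : G, ⟪Sg u, v⟫ = ⟪u, Sg v⟫)
    (hSsm : ∀ u : G, σ * ‖u‖ ^ 2 ≤ ⟪Sg u, u⟫)
    (hUinv : Ups.comp UpsI = ContinuousLinearMap.id ℝ H ∧
      UpsI.comp Ups = ContinuousLinearMap.id ℝ H)
    (hSinv : Sg.comp SgI = ContinuousLinearMap.id ℝ G ∧
      SgI.comp Sg = ContinuousLinearMap.id ℝ G)
    (hsU : (∀ x y : H, ⟪sUps x, y⟫ = ⟪x, sUps y⟫) ∧ (∀ x : H, 0 ≤ ⟪sUps x, x⟫) ∧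
      sUps.comp sUps = Ups)
    (hsS : (∀ u v : G, ⟪sSg u, v⟫ = ⟪u, sSg v⟫) ∧ (∀ u : G, 0 ≤ ⟪sSg u, u⟫) ∧
      sSg.comp sSg = Sg)
    (hnorm : ‖sSg.comp (L.comp sUps)‖ ≤ 1)
    (V : WithLp 2 (H × G) →L[ℝ] WithLp 2 (H × G))
    (hV : ∀ (x : H) (u : G),
      V (pd x u) = pd (UpsI x - ContinuousLinearMap.adjoint L u) (SgI u - L x)) :
    (IsClosed (Set.range V) ↔
      IsClosed (Set.range (SgI - L.comp (Ups.comp (ContinuousLinearMap.adjoint L))))) ∧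
    (IsClosed (Set.range V) ↔
      IsClosed (Set.range (UpsI - (ContinuousLinearMap.adjoint L).comp (Sg.comp L)))) := by
  classical
  set L' := ContinuousLinearMap.adjoint L with hL'
  have hUinv1 : ∀ x : H, Ups (UpsI x) = x := fun x =>
    congrArg (fun f : H →L[ℝ] H => f x) hUinv.1
  have hUinv2 : ∀ x : H, UpsI (Ups x) = x := fun x =>
    congrArg (fun f : H →L[ℝ] H => f x) hUinv.2
  have hSinv1 : ∀ u : G, Sg (SgI u) = u := fun u =>
    congrArg (fun f : G →L[ℝ] G => f u) hSinv.1
  have hSinv2 : ∀ u : G, SgI (Sg u) = u := fun u =>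
    congrArg (fun f : G →L[ℝ] G => f u) hSinv.2
  let e : WithLp 2 (H × G) ≃L[ℝ] H × G := WithLp.prodContinuousLinearEquiv 2 ℝ H G
  let fst : H × G →L[ℝ] H := ContinuousLinearMap.fst ℝ H G
  let snd : H × G →L[ℝ] G := ContinuousLinearMap.snd ℝ H G
  -- the "same" map on the plain product
  let W : H × G →L[ℝ] H × G :=
    ((UpsI.comp fst) - (L'.comp snd)).prod ((SgI.comp snd) - (L.comp fst))
  have hWapp : ∀ p : H × G, W p = (UpsI p.1 - L' p.2, SgI p.2 - L p.1) := fun p => rfl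
  have hVW : ∀ p : H × G, V (e.symm p) = e.symm (W p) := by
    intro p
    have h := hV p.1 p.2
    simpa [pd, e, hWapp] using h
  have hrange : Set.range V = e.symm '' Set.range W := by
    ext z
    constructor
    · rintro ⟨w, rfl⟩
      refine ⟨W (e w), ⟨e w, rfl⟩, ?_⟩
      rw [← hVW (e w)]; simp
    · rintro ⟨_, ⟨p, rfl⟩, rfl⟩
      exact ⟨e.symm p, hVW p⟩
  have hVclosed : IsClosed (Set.range V) ↔ IsClosed (Set.range W) := by
    rw [hrange]
    have : e.symm '' Set.range W = e.symm.toHomeomorph '' Set.range W := rfl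
    rw [this, e.symm.toHomeomorph.isClosed_image]
  -- Part (ii)
  set S₁ : G →L[ℝ] G := SgI - L.comp (Ups.comp L') with hS₁
  have part1 : IsClosed (Set.range W) ↔ IsClosed (Set.range S₁) := by
    let A : (H × G) ≃L[ℝ] (H × G) :=
      ContinuousLinearEquiv.equivOfInverse
        (fst.prod (snd - (L.comp (Ups.comp fst))))
        (fst.prod (snd + (L.comp (Ups.comp fst))))
        (fun p => by
          simp [ContinuousLinearMap.prod_apply, ContinuousLinearMap.comp_apply,
            ContinuousLinearMap.sub_apply, ContinuousLinearMap.add_apply, fst, snd])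
        (fun p => by
          simp [ContinuousLinearMap.prod_apply, ContinuousLinearMap.comp_apply,
            ContinuousLinearMap.sub_apply, ContinuousLinearMap.add_apply, fst, snd])
    let D : H × G →L[ℝ] H × G :=
      ((UpsI.comp fst) - (L'.comp snd)).prod (S₁.comp snd)
    have hWD : ∀ p : H × G, W p = A (D p) := by
      rintro ⟨x, u⟩
      show (UpsI x - L' u, SgI u - L x)
          = ((UpsI x - L' u : H), S₁ u - L (Ups (UpsI x - L' u)))
      have : S₁ u - L (Ups (UpsI x - L' u)) = SgI u - L x := by
        simp only [hS₁, ContinuousLinearMap.sub_apply, ContinuousLinearMap.comp_apply,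
          map_sub, hUinv1]
        abel
      rw [this]
    have hrW : (⇑W : H × G → H × G) = fun p => A (D p) := funext hWD
    rw [hrW, aux_range_comp_equiv A D]
    have hrD : Set.range D = (Set.univ : Set H) ×ˢ Set.range S₁ := by
      ext z
      constructor
      · rintro ⟨⟨x, u⟩, rfl⟩
        exact ⟨trivial, u, rfl⟩
      · obtain ⟨y, v⟩ := z
        rintro ⟨-, u, rfl⟩
        refine ⟨(Ups (y + L' u), u), ?_⟩
        show (UpsI (Ups (y + L' u)) - L' u, S₁ u) = (y, S₁ u)
        rw [hUinv2]
        simp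
    rw [hrD, aux_closed_univ_prod]
  -- Part (iii)
  set S₂ : H →L[ℝ] H := UpsI - L'.comp (Sg.comp L) with hS₂
  have part2 : IsClosed (Set.range W) ↔ IsClosed (Set.range S₂) := by
    let B : (H × G) ≃L[ℝ] (H × G) :=
      ContinuousLinearEquiv.equivOfInverse
        ((fst - (L'.comp (Sg.comp snd))).prod snd)
        ((fst + (L'.comp (Sg.comp snd))).prod snd)
        (fun p => by
          simp [ContinuousLinearMap.prod_apply, ContinuousLinearMap.comp_apply,
            ContinuousLinearMap.sub_apply, ContinuousLinearMap.add_apply, fst, snd])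
        (fun p => by
          simp [ContinuousLinearMap.prod_apply, ContinuousLinearMap.comp_apply,
            ContinuousLinearMap.sub_apply, ContinuousLinearMap.add_apply, fst, snd])
    let D : H × G →L[ℝ] H × G :=
      (S₂.comp fst).prod ((SgI.comp snd) - (L.comp fst))
    have hWD : ∀ p : H × G, W p = B (D p) := by
      rintro ⟨x, u⟩
      show (UpsI x - L' u, SgI u - L x)
          = ((S₂ x - L' (Sg (SgI u - L x)) : H), SgI u - L x)
      have : S₂ x - L' (Sg (SgI u - L x)) = UpsI x - L' u := by
        simp only [hS₂, ContinuousLinearMap.sub_apply, ContinuousLinearMap.comp_apply,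
          map_sub, hSinv1]
        abel
      rw [this]
    have hrW : (⇑W : H × G → H × G) = fun p => B (D p) := funext hWD
    rw [hrW, aux_range_comp_equiv B D]
    have hrD : Set.range D = Set.range S₂ ×ˢ (Set.univ : Set G) := by
      ext z
      constructor
      · rintro ⟨⟨x, u⟩, rfl⟩
        exact ⟨⟨x, rfl⟩, trivial⟩
      · obtain ⟨y, v⟩ := z
        rintro ⟨⟨x, rfl⟩, -⟩
        refine ⟨(x, Sg (v + L x)), ?_⟩
        show (S₂ x, SgI (Sg (v + L x)) - L x) = (S₂ x, v)
        rw [hSinv2]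
        simp
    rw [hrD, aux_closed_prod_univ]
  exact ⟨hVclosed.trans part1, hVclosed.trans part2⟩
end

section
/- If L : H → G is a surjective bounded linear operator and Υ : H → H is a strongly monotone self-adjoint bounded linear operator, then L Υ L* : G → G is strongly monotone, hence invertible; and with Σ := (L Υ L*)⁻¹, the operator V(x,u) = (Υ⁻¹x − L*u, Σ⁻¹u − Lx) has closed range. -/
/-!
By the open mapping theorem every `u` has a preimage `x` under `L` with `‖x‖ ≤ C‖u‖`, and
`‖u‖² = ⟪x, L*u⟫ ≤ C‖u‖‖L*u‖` gives `‖u‖ ≤ C‖L*u‖`. Hence `⟪LΥL*u, u⟫ = ⟪ΥL*u, L*u⟫ ≥ (τ/C²)‖u‖²`, and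
Lax–Milgram inverts `LΥL*`. The range of `V` is the zero set `{(a, b) | LΥa + b = 0}` of a
continuous map, hence closed.
-/

open RealInnerProductSpace

open ContinuousLinearMap

section DirectSum

variable {H G : Type*} [NormedAddCommGroup H] [NormedSpace ℝ H] [NormedAddCommGroup G]
  [NormedSpace ℝ G]

theorem range_eq_setOf_add_eq_zero {L : H →L[ℝ] G} {Ups UpsI : H →L[ℝ] H} (K : G →L[ℝ] H)
    (hUUI : Function.LeftInverse Ups UpsI) (hUIU : Function.LeftInverse UpsI Ups)
    {V : WithLp 2 (H × G) → WithLp 2 (H × G)}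
    (hV : ∀ (x : H) (u : G), V (pd x u) = pd (UpsI x - K u) (L (Ups (K u)) - L x)) :
    Set.range V = {z | L (Ups z.fst) + z.snd = 0} := by
  ext z
  constructor
  · rintro ⟨y, rfl⟩
    have hy : V y = pd (UpsI y.fst - K y.snd) (L (Ups (K y.snd)) - L y.fst) := hV y.fst y.snd
    simp [hy, pd, hUUI _]
  · intro hz
    refine ⟨pd (Ups z.fst) 0, ?_⟩
    -- the preimage is `V (Υ a, 0) = (a, -L Υ a)`
    rw [hV, hUIU, map_zero, map_zero, map_zero, sub_zero, zero_sub,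
      ← eq_neg_of_add_eq_zero_right hz]
    rfl

theorem isClosed_range_of_forall_apply_pd {L : H →L[ℝ] G} {Ups UpsI : H →L[ℝ] H} (K : G →L[ℝ] H)
    (hUUI : Function.LeftInverse Ups UpsI) (hUIU : Function.LeftInverse UpsI Ups)
    {V : WithLp 2 (H × G) → WithLp 2 (H × G)}
    (hV : ∀ (x : H) (u : G), V (pd x u) = pd (UpsI x - K u) (L (Ups (K u)) - L x)) :
    IsClosed (Set.range V) := by
  rw [range_eq_setOf_add_eq_zero K hUUI hUIU hV]
  exact isClosed_eq (by fun_prop) continuous_const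

end DirectSum

section Hilbert

variable {H G : Type*} [NormedAddCommGroup H] [InnerProductSpace ℝ H] [CompleteSpace H]
  [NormedAddCommGroup G] [InnerProductSpace ℝ G] [CompleteSpace G]

theorem ContinuousLinearMap.exists_norm_le_mul_norm_adjoint_of_surjective {L : H →L[ℝ] G}
    (hL : Function.Surjective L) : ∃ C > 0, ∀ u : G, ‖u‖ ≤ C * ‖adjoint L u‖ := by
  obtain ⟨C, hC, hpre⟩ := L.exists_preimage_norm_le hL
  refine ⟨C, hC, fun u => ?_⟩
  obtain ⟨x, rfl, hx⟩ := hpre u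
  have : ‖L x‖ ^ 2 ≤ C * ‖adjoint L (L x)‖ * ‖L x‖ :=
    calc ‖L x‖ ^ 2 = ⟪x, adjoint L (L x)⟫ := by
          rw [adjoint_inner_right, real_inner_self_eq_norm_sq]
      _ ≤ ‖x‖ * ‖adjoint L (L x)‖ := real_inner_le_norm _ _
      _ ≤ C * ‖L x‖ * ‖adjoint L (L x)‖ := by gcongr
      _ = C * ‖adjoint L (L x)‖ * ‖L x‖ := by ring
  rcases (norm_nonneg (L x)).eq_or_lt with h | h
  · rw [← h]; positivity
  · exact le_of_mul_le_mul_right (by rwa [sq] at this) h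

theorem mul_sq_le_inner_comp_adjoint {L : H →L[ℝ] G} {Ups : H →L[ℝ] H} {τ C : ℝ}
    (hC : 0 < C) (hLC : ∀ u : G, ‖u‖ ≤ C * ‖adjoint L u‖)
    (hUps : ∀ x : H, τ * ‖x‖ ^ 2 ≤ ⟪Ups x, x⟫) (hτ : 0 ≤ τ) (u : G) :
    τ / C ^ 2 * ‖u‖ ^ 2 ≤ ⟪L (Ups (adjoint L u)), u⟫ := by
  have hsq : ‖u‖ ^ 2 ≤ C ^ 2 * ‖adjoint L u‖ ^ 2 := by
    rw [← mul_pow]; exact pow_le_pow_left₀ (norm_nonneg u) (hLC u) 2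
  calc τ / C ^ 2 * ‖u‖ ^ 2 ≤ τ / C ^ 2 * (C ^ 2 * ‖adjoint L u‖ ^ 2) := by gcongr
    _ = τ * ‖adjoint L u‖ ^ 2 := by field_simp
    _ ≤ ⟪Ups (adjoint L u), adjoint L u⟫ := hUps _
    _ = ⟪L (Ups (adjoint L u)), u⟫ := adjoint_inner_right L _ _

theorem exists_continuousLinearEquiv_of_strongly_monotone {S : G →L[ℝ] G} {c : ℝ} (hc : 0 < c)
    (hS : ∀ u : G, c * ‖u‖ ^ 2 ≤ ⟪S u, u⟫) : ∃ e : G ≃L[ℝ] G, (e : G →L[ℝ] G) = S := by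
  have coercive : IsCoercive ((innerSL ℝ).comp S) :=
    ⟨c, hc, fun u => by simpa [sq, mul_assoc] using hS u⟩
  refine ⟨coercive.continuousLinearEquivOfBilin, ContinuousLinearMap.ext fun u => ?_⟩
  exact ext_inner_right ℝ fun w => coercive.continuousLinearEquivOfBilin_apply u w

end Hilbert

theorem stmt_8_general {H G : Type*} [NormedAddCommGroup H] [InnerProductSpace ℝ H] [CompleteSpace H]
    [NormedAddCommGroup G] [InnerProductSpace ℝ G] [CompleteSpace G]
    (L : H →L[ℝ] G) (hL : Function.Surjective L)
    (Ups UpsI : H →L[ℝ] H) (τ : ℝ) (hτ : 0 < τ)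
    (hUsm : ∀ x : H, τ * ‖x‖ ^ 2 ≤ ⟪Ups x, x⟫)
    (hUinv : Ups.comp UpsI = ContinuousLinearMap.id ℝ H ∧
      UpsI.comp Ups = ContinuousLinearMap.id ℝ H)
    (V : WithLp 2 (H × G) →L[ℝ] WithLp 2 (H × G))
    (hV : ∀ (x : H) (u : G),
      V (pd x u) = pd (UpsI x - ContinuousLinearMap.adjoint L u)
        (L (Ups (ContinuousLinearMap.adjoint L u)) - L x)) :
    (∃ c > (0:ℝ), ∀ u : G,
      c * ‖u‖ ^ 2 ≤ ⟪L (Ups (ContinuousLinearMap.adjoint L u)), u⟫) ∧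
    (∃ T : G →L[ℝ] G,
      (L.comp (Ups.comp (ContinuousLinearMap.adjoint L))).comp T =
        ContinuousLinearMap.id ℝ G ∧
      T.comp (L.comp (Ups.comp (ContinuousLinearMap.adjoint L))) =
        ContinuousLinearMap.id ℝ G) ∧
    IsClosed (Set.range V) := by
  obtain ⟨C, hC, hLC⟩ := L.exists_norm_le_mul_norm_adjoint_of_surjective hL
  have hmono := mul_sq_le_inner_comp_adjoint hC hLC hUsm hτ.le
  have hc : 0 < τ / C ^ 2 := by positivity
  obtain ⟨e, he⟩ :=
    exists_continuousLinearEquiv_of_strongly_monotone (S := L.comp (Ups.comp (adjoint L))) hc hmono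
  refine ⟨⟨τ / C ^ 2, hc, hmono⟩, ⟨e.symm, ?_, ?_⟩, ?_⟩
  · rw [← he]; exact e.coe_comp_coe_symm
  · rw [← he]; exact e.coe_symm_comp_coe
  · exact isClosed_range_of_forall_apply_pd _ (DFunLike.congr_fun hUinv.1) (DFunLike.congr_fun hUinv.2) hV

/-- If `L` is surjective and `Υ` strongly monotone self-adjoint, then `LΥL*` is
strongly monotone, hence invertible; and with `Σ := (LΥL*)⁻¹` (so `Σ⁻¹ = LΥL*`),
the operator `V(x,u) = (Υ⁻¹x − L*u, Σ⁻¹u − Lx)` has closed range. -/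
theorem stmt_8 {H G : Type*} [NormedAddCommGroup H] [InnerProductSpace ℝ H] [CompleteSpace H]
    [NormedAddCommGroup G] [InnerProductSpace ℝ G] [CompleteSpace G]
    (L : H →L[ℝ] G) (hL : Function.Surjective L)
    (Ups UpsI : H →L[ℝ] H) (τ : ℝ) (hτ : 0 < τ)
    (hUsa : ∀ x y : H, ⟪Ups x, y⟫ = ⟪x, Ups y⟫)
    (hUsm : ∀ x : H, τ * ‖x‖ ^ 2 ≤ ⟪Ups x, x⟫)
    (hUinv : Ups.comp UpsI = ContinuousLinearMap.id ℝ H ∧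
      UpsI.comp Ups = ContinuousLinearMap.id ℝ H)
    (V : WithLp 2 (H × G) →L[ℝ] WithLp 2 (H × G))
    (hV : ∀ (x : H) (u : G),
      V (pd x u) = pd (UpsI x - ContinuousLinearMap.adjoint L u)
        (L (Ups (ContinuousLinearMap.adjoint L u)) - L x)) :
    (∃ c > (0:ℝ), ∀ u : G,
      c * ‖u‖ ^ 2 ≤ ⟪L (Ups (ContinuousLinearMap.adjoint L u)), u⟫) ∧
    (∃ T : G →L[ℝ] G,
      (L.comp (Ups.comp (ContinuousLinearMap.adjoint L))).comp T =
        ContinuousLinearMap.id ℝ G ∧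
      T.comp (L.comp (Ups.comp (ContinuousLinearMap.adjoint L))) =
        ContinuousLinearMap.id ℝ G) ∧
    IsClosed (Set.range V) :=
  stmt_8_general L hL Ups UpsI τ hτ hUsm hUinv V hV
end

section
/- Let A, B, L, Σ, Υ, V, M be as in the primal-dual setting and define W : H×G → 2^{H×G} by W(x,u) = {(y,v) : V(y,v) ∈ M(x,u)}. Then for every (x,u) ∈ H×G, the resolvent J_W(x,u) = (Id + W)⁻¹(x,u) is single-valued and equals (p, q) where p = J_{ΥA}(x − ΥL*u) and q = J_{ΣB⁻¹}(u + ΣL(2p − x)). -/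
open RealInnerProductSpace

/-- A set-valued operator is monotone. -/
def MonotoneOp {E : Type*} [NormedAddCommGroup E] [InnerProductSpace ℝ E]
    (A : E → Set E) : Prop :=
  ∀ x y u v, u ∈ A x → v ∈ A y → 0 ≤ ⟪x - y, u - v⟫

/-- A set-valued operator is maximally monotone. -/
def MaximalMonotone {E : Type*} [NormedAddCommGroup E] [InnerProductSpace ℝ E]
    (A : E → Set E) : Prop :=
  MonotoneOp A ∧ ∀ x u, (∀ y v, v ∈ A y → 0 ≤ ⟪x - y, u - v⟫) → u ∈ A x

/-- The resolvent `J_W = (Id + W)⁻¹` of `W(x,u) = {(y,v) : V(y,v) ∈ M(x,u)}` is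
single-valued and `J_W(x,u) = (p,q)` with `p = J_{ΥA}(x − ΥL*u)` and
`q = J_{ΣB⁻¹}(u + ΣL(2p − x))`. -/
theorem stmt_10 {H G : Type*} [NormedAddCommGroup H] [InnerProductSpace ℝ H] [CompleteSpace H]
    [NormedAddCommGroup G] [InnerProductSpace ℝ G] [CompleteSpace G]
    (A : H → Set H) (B : G → Set G) (L : H →L[ℝ] G)
    (hA : MaximalMonotone A) (hB : MaximalMonotone B)
    (Ups UpsI : H →L[ℝ] H) (Sg SgI : G →L[ℝ] G)
    (τ σ : ℝ) (hτ : 0 < τ) (hσ : 0 < σ)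
    (hUsa : ∀ x y : H, ⟪Ups x, y⟫ = ⟪x, Ups y⟫)
    (hUsm : ∀ x : H, τ * ‖x‖ ^ 2 ≤ ⟪Ups x, x⟫)
    (hSsa : ∀ u v : G, ⟪Sg u, v⟫ = ⟪u, Sg v⟫)
    (hSsm : ∀ u : G, σ * ‖u‖ ^ 2 ≤ ⟪Sg u, u⟫)
    (hUinv : Ups.comp UpsI = ContinuousLinearMap.id ℝ H ∧
      UpsI.comp Ups = ContinuousLinearMap.id ℝ H)
    (hSinv : Sg.comp SgI = ContinuousLinearMap.id ℝ G ∧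
      SgI.comp Sg = ContinuousLinearMap.id ℝ G)
    (V : WithLp 2 (H × G) →L[ℝ] WithLp 2 (H × G))
    (hV : ∀ (x : H) (u : G),
      V (pd x u) = pd (UpsI x - ContinuousLinearMap.adjoint L u) (SgI u - L x))
    (M : WithLp 2 (H × G) → Set (WithLp 2 (H × G)))
    (hM : ∀ (x : H) (u : G), M (pd x u) =
      {yv : WithLp 2 (H × G) |
        (WithLp.equiv 2 (H × G) yv).1 - ContinuousLinearMap.adjoint L u ∈ A x ∧
        u ∈ B ((WithLp.equiv 2 (H × G) yv).2 + L x)})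
    (W : WithLp 2 (H × G) → Set (WithLp 2 (H × G)))
    (hW : ∀ pq : WithLp 2 (H × G), W pq = {yv : WithLp 2 (H × G) | V yv ∈ M pq})
    (JA : H → H) (hJA : ∀ z p : H, JA z = p ↔ UpsI (z - p) ∈ A p)
    (JB : G → G) (hJB : ∀ z q : G, JB z = q ↔ q ∈ B (SgI (z - q))) :
    ∀ (x : H) (u : G),
      (∃! pq : WithLp 2 (H × G), pd x u - pq ∈ W pq) ∧
      (∀ pq : WithLp 2 (H × G), pd x u - pq ∈ W pq →
        pq = pd (JA (x - Ups (ContinuousLinearMap.adjoint L u)))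
          (JB (u + Sg (L ((2:ℝ) • JA (x - Ups (ContinuousLinearMap.adjoint L u)) - x))))) := by
  obtain ⟨hU1, hU2⟩ := hUinv
  obtain ⟨hS1, hS2⟩ := hSinv
  have hU2' : ∀ z, UpsI (Ups z) = z := fun z =>
    congrFun (congrArg DFunLike.coe hU2) z
  have hS2' : ∀ z, SgI (Sg z) = z := fun z =>
    congrFun (congrArg DFunLike.coe hS2) z
  intro x u
  set L' := ContinuousLinearMap.adjoint L with hL'
  have key : ∀ p q, pd x u - pd p q ∈ W (pd p q) ↔
      (JA (x - Ups (L' u)) = p ∧ JB (u + Sg (L ((2:ℝ) • p - x))) = q) := by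
    intro p q
    have hsub : pd x u - pd p q = pd (x - p) (u - q) := rfl
    rw [hsub, hW, Set.mem_setOf_eq, hV, hM]
    have hfst : (WithLp.equiv 2 (H × G) (pd (UpsI (x - p) - L' (u - q)) (SgI (u - q) - L (x - p)))).1
        = UpsI (x - p) - L' (u - q) := rfl
    have hsnd : (WithLp.equiv 2 (H × G) (pd (UpsI (x - p) - L' (u - q)) (SgI (u - q) - L (x - p)))).2
        = SgI (u - q) - L (x - p) := rfl
    rw [Set.mem_setOf_eq, hfst, hsnd, hJA _ p, hJB _ q]
    have eqA : UpsI ((x - Ups (L' u)) - p) = UpsI (x - p) - L' (u - q) - L' q := by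
      simp only [map_sub, hU2']
      abel
    have eqB : SgI ((u + Sg (L ((2:ℝ) • p - x))) - q) = (SgI (u - q) - L (x - p)) + L p := by
      simp only [map_sub, map_add, map_smul, hS2', two_smul]
      abel
    rw [eqA, eqB]
  set p₀ := JA (x - Ups (L' u)) with hp₀
  set q₀ := JB (u + Sg (L ((2:ℝ) • p₀ - x))) with hq₀
  have huniq : ∀ pq : WithLp 2 (H × G), pd x u - pq ∈ W pq → pq = pd p₀ q₀ := by
    intro pq hpq
    have hrep : pq = pd (WithLp.equiv 2 (H × G) pq).1 (WithLp.equiv 2 (H × G) pq).2 := rfl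
    rw [hrep] at hpq
    obtain ⟨h1, h2⟩ := (key _ _).mp hpq
    rw [← h1] at h2
    rw [hrep, ← h1, ← h2]
  have hmem : pd x u - pd p₀ q₀ ∈ W (pd p₀ q₀) := (key p₀ q₀).mpr ⟨rfl, rfl⟩
  exact ⟨⟨pd p₀ q₀, hmem, huniq⟩, huniq⟩
end

section
/- With W as above and T := P_{ran V} ∘ J_W restricted to ran V, the operator T is firmly nonexpansive on (ran V, ⟨·,·⟩_V): for all z, w ∈ ran V, ⟨Tz − Tw, (Id − T)z − (Id − T)w⟩_V ≥ 0. -/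
open RealInnerProductSpace

/-! The primal–dual operator `M` is monotone: in `⟪(x, u) - (y, v), M(x, u) - M(y, v)⟫` the coupling
terms `-⟪x - y, L†(u - v)⟫` from `A` and `⟪L(x - y), u - v⟫` from `B` cancel. As `V` is self-adjoint
and `P` projects orthogonally onto `ran V`, `V` vanishes on `ran (Id - P)`, i.e. `V ∘ P = V`; hence `P`
can be dropped on both sides of `⟪Tz - Tw, V(…)⟫`, leaving `⟪p - q, V(z - p) - V(w - q)⟫` with
`p = J_W z`, `q = J_W w`. Since `V(z - p) ∈ M p` and `V(w - q) ∈ M q`, this is nonnegative. -/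

section

variable {E : Type*} [NormedAddCommGroup E] [InnerProductSpace ℝ E]

theorem ContinuousLinearMap.apply_eq_zero_of_forall_inner_range {V : E →L[ℝ] E}
    (hVsa : ∀ z w : E, ⟪V z, w⟫ = ⟪z, V w⟫) {r : E}
    (hr : ∀ w ∈ Set.range V, ⟪r, w⟫ = 0) : V r = 0 :=
  inner_self_eq_zero.mp <| (hVsa r (V r)).trans <| hr _ ⟨_, rfl⟩

theorem inner_map_sub_map_nonneg_of_mem {V P : E →L[ℝ] E} {M : E → Set E} (hM : MonotoneOp M)
    (hVsa : ∀ z w : E, ⟪V z, w⟫ = ⟪z, V w⟫) (hVP : ∀ r, V (P r) = V r) {z w p q : E}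
    (hp : V (z - p) ∈ M p) (hq : V (w - q) ∈ M q) :
    0 ≤ ⟪P p - P q, V ((z - P p) - (w - P q))⟫ := by
  have hdrop : V ((z - P p) - (w - P q)) = V (z - p) - V (w - q) := by
    simp only [map_sub, hVP]
  calc 0 ≤ ⟪p - q, V (z - p) - V (w - q)⟫ := hM _ _ _ _ hp hq
    _ = ⟪P p - P q, V ((z - P p) - (w - P q))⟫ := by
      rw [hdrop, ← map_sub, ← hVsa, ← hVsa, map_sub, map_sub, hVP, hVP]

end

local postfix:max "†" => ContinuousLinearMap.adjoint

theorem MonotoneOp.primalDual {H G : Type*} [NormedAddCommGroup H] [InnerProductSpace ℝ H]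
    [CompleteSpace H] [NormedAddCommGroup G] [InnerProductSpace ℝ G] [CompleteSpace G]
    {A : H → Set H} {B : G → Set G} (L : H →L[ℝ] G) (hA : MonotoneOp A) (hB : MonotoneOp B)
    {M : WithLp 2 (H × G) → Set (WithLp 2 (H × G))}
    (hM : ∀ (x : H) (u : G), M (pd x u) =
      {yv : WithLp 2 (H × G) |
        (WithLp.equiv 2 (H × G) yv).1 - ContinuousLinearMap.adjoint L u ∈ A x ∧
        u ∈ B ((WithLp.equiv 2 (H × G) yv).2 + L x)}) :
    MonotoneOp M := by
  rintro ⟨x, u⟩ ⟨y, v⟩ ⟨m, m'⟩ ⟨n, n'⟩ hm hn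
  change _ ∈ M (pd x u) at hm
  change _ ∈ M (pd y v) at hn
  rw [hM] at hm hn
  obtain ⟨hmA, hmB⟩ : m - L† u ∈ A x ∧ u ∈ B (m' + L x) := hm
  obtain ⟨hnA, hnB⟩ : n - L† v ∈ A y ∧ v ∈ B (n' + L y) := hn
  have hdual : ⟪x - y, (m - L† u) - (n - L† v)⟫ = ⟪x - y, m - n⟫ - ⟪L (x - y), u - v⟫ := by
    rw [sub_sub_sub_comm, ← map_sub, inner_sub_right, ContinuousLinearMap.adjoint_inner_right]
  have hprimal : ⟪(m' + L x) - (n' + L y), u - v⟫ = ⟪m' - n', u - v⟫ + ⟪L (x - y), u - v⟫ := by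
    rw [add_sub_add_comm, ← map_sub, inner_add_left]
  have hAxy := hA _ _ _ _ hmA hnA
  have hBuv := hB _ _ _ _ hmB hnB
  rw [WithLp.prod_inner_apply]
  change 0 ≤ ⟪x - y, m - n⟫ + ⟪u - v, m' - n'⟫
  rw [← real_inner_comm (u - v)]
  linarith

theorem stmt_12_general {H G : Type*} [NormedAddCommGroup H] [InnerProductSpace ℝ H] [CompleteSpace H]
    [NormedAddCommGroup G] [InnerProductSpace ℝ G] [CompleteSpace G]
    (A : H → Set H) (B : G → Set G) (L : H →L[ℝ] G)
    (hA : MaximalMonotone A) (hB : MaximalMonotone B)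
    (V : WithLp 2 (H × G) →L[ℝ] WithLp 2 (H × G))
    (M : WithLp 2 (H × G) → Set (WithLp 2 (H × G)))
    (hM : ∀ (x : H) (u : G), M (pd x u) =
      {yv : WithLp 2 (H × G) |
        (WithLp.equiv 2 (H × G) yv).1 - ContinuousLinearMap.adjoint L u ∈ A x ∧
        u ∈ B ((WithLp.equiv 2 (H × G) yv).2 + L x)})
    (W : WithLp 2 (H × G) → Set (WithLp 2 (H × G)))
    (hW : ∀ pq : WithLp 2 (H × G), W pq = {yv : WithLp 2 (H × G) | V yv ∈ M pq})
    (JW : WithLp 2 (H × G) → WithLp 2 (H × G))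
    (hJW : ∀ z pq : WithLp 2 (H × G), JW z = pq ↔ z - pq ∈ W pq)
    (P : WithLp 2 (H × G) →L[ℝ] WithLp 2 (H × G))
    (hPorth : ∀ z : WithLp 2 (H × G), ∀ w ∈ Set.range V, ⟪z - P z, w⟫ = 0)
    (hVsa : ∀ z w : WithLp 2 (H × G), ⟪V z, w⟫ = ⟪z, V w⟫) :
    ∀ z ∈ Set.range V, ∀ w ∈ Set.range V,
      0 ≤ ⟪P (JW z) - P (JW w), V ((z - P (JW z)) - (w - P (JW w)))⟫ := by
  have hVP (r : WithLp 2 (H × G)) : V (P r) = V r := by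
    rw [eq_comm, ← sub_eq_zero, ← map_sub]
    exact V.apply_eq_zero_of_forall_inner_range hVsa (hPorth r)
  have hJW_mem (z : WithLp 2 (H × G)) : V (z - JW z) ∈ M (JW z) := by
    simpa only [hW, Set.mem_ofPred_eq] using (hJW z (JW z)).mp rfl
  intro z _ w _
  exact inner_map_sub_map_nonneg_of_mem (hA.1.primalDual L hB.1 hM) hVsa hVP
    (hJW_mem z) (hJW_mem w)

/-- The operator `T := P_{ran V} ∘ J_W` restricted to `ran V` is firmly
nonexpansive on `(ran V, ⟪·,·⟫_V)`:
`⟪Tz − Tw, (Id − T)z − (Id − T)w⟫_V ≥ 0` for all `z, w ∈ ran V`. -/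
theorem stmt_12 {H G : Type*} [NormedAddCommGroup H] [InnerProductSpace ℝ H] [CompleteSpace H]
    [NormedAddCommGroup G] [InnerProductSpace ℝ G] [CompleteSpace G]
    (A : H → Set H) (B : G → Set G) (L : H →L[ℝ] G)
    (hA : MaximalMonotone A) (hB : MaximalMonotone B)
    (Ups UpsI : H →L[ℝ] H) (Sg SgI : G →L[ℝ] G)
    (τ σ : ℝ) (hτ : 0 < τ) (hσ : 0 < σ)
    (hUsa : ∀ x y : H, ⟪Ups x, y⟫ = ⟪x, Ups y⟫)
    (hUsm : ∀ x : H, τ * ‖x‖ ^ 2 ≤ ⟪Ups x, x⟫)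
    (hSsa : ∀ u v : G, ⟪Sg u, v⟫ = ⟪u, Sg v⟫)
    (hSsm : ∀ u : G, σ * ‖u‖ ^ 2 ≤ ⟪Sg u, u⟫)
    (hUinv : Ups.comp UpsI = ContinuousLinearMap.id ℝ H ∧
      UpsI.comp Ups = ContinuousLinearMap.id ℝ H)
    (hSinv : Sg.comp SgI = ContinuousLinearMap.id ℝ G ∧
      SgI.comp Sg = ContinuousLinearMap.id ℝ G)
    (V : WithLp 2 (H × G) →L[ℝ] WithLp 2 (H × G))
    (hV : ∀ (x : H) (u : G),
      V (pd x u) = pd (UpsI x - ContinuousLinearMap.adjoint L u) (SgI u - L x))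
    (M : WithLp 2 (H × G) → Set (WithLp 2 (H × G)))
    (hM : ∀ (x : H) (u : G), M (pd x u) =
      {yv : WithLp 2 (H × G) |
        (WithLp.equiv 2 (H × G) yv).1 - ContinuousLinearMap.adjoint L u ∈ A x ∧
        u ∈ B ((WithLp.equiv 2 (H × G) yv).2 + L x)})
    (W : WithLp 2 (H × G) → Set (WithLp 2 (H × G)))
    (hW : ∀ pq : WithLp 2 (H × G), W pq = {yv : WithLp 2 (H × G) | V yv ∈ M pq})
    (JW : WithLp 2 (H × G) → WithLp 2 (H × G))
    (hJW : ∀ z pq : WithLp 2 (H × G), JW z = pq ↔ z - pq ∈ W pq)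
    (P : WithLp 2 (H × G) →L[ℝ] WithLp 2 (H × G))
    (hPmem : ∀ z, P z ∈ Set.range V)
    (hPfix : ∀ z ∈ Set.range V, P z = z)
    (hPorth : ∀ z : WithLp 2 (H × G), ∀ w ∈ Set.range V, ⟪z - P z, w⟫ = 0)
    (hVmono : ∀ z : WithLp 2 (H × G), 0 ≤ ⟪V z, z⟫)
    (hVsa : ∀ z w : WithLp 2 (H × G), ⟪V z, w⟫ = ⟪z, V w⟫)
    (hclosed : IsClosed (Set.range V)) :
    ∀ z ∈ Set.range V, ∀ w ∈ Set.range V,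
      0 ≤ ⟪P (JW z) - P (JW w), V ((z - P (JW z)) - (w - P (JW w)))⟫ :=
  stmt_12_general A B L hA hB V M hM W hW JW hJW P hPorth hVsa
end

section
/- Let A : H → 2^H, B : H → 2^H be maximally monotone and Υ : H → H strongly monotone self-adjoint bounded linear. Define Λ : H×H → H : (x,u) ↦ x − Υu and V(x,u) = (Υ⁻¹x − u, Υu − x). Then Λ*Λ = V ∘ 𝚼, where 𝚼(x,u) = (Υx, Υu), and ran V = ran Λ*; consequently H × H = ran Λ* ⊕ ker Λ. -/
open RealInnerProductSpace

section aux
variable {H : Type*} [NormedAddCommGroup H] [InnerProductSpace ℝ H] [CompleteSpace H]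

lemma pd_inj {a b c d : H} (h : pd a b = pd c d) : a = c ∧ b = d := by
  have h2 : (a, b) = (c, d) := (WithLp.equiv 2 (H × H)).symm.injective h
  exact ⟨congrArg Prod.fst h2, congrArg Prod.snd h2⟩

lemma pd_add (a b c d : H) : pd a b + pd c d = pd (a + c) (b + d) := rfl

lemma pd_eta (p : WithLp 2 (H × H)) :
    pd (WithLp.equiv 2 (H × H) p).1 (WithLp.equiv 2 (H × H) p).2 = p := rfl

lemma exists_unique_inv (Ups : H →L[ℝ] H) (hUsa : ∀ x y : H, ⟪Ups x, y⟫ = ⟪x, Ups y⟫) (f : H) :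
    ∃! z : H, z + Ups (Ups z) = f := by
  set T : H →L[ℝ] H := ContinuousLinearMap.id ℝ H + Ups.comp Ups with hT
  have hTapp : ∀ z, T z = z + Ups (Ups z) := fun z => rfl
  have hB : ∀ u v : H, ((innerSL ℝ).comp T) u v = ⟪T u, v⟫ := fun u v => rfl
  have coer : IsCoercive ((innerSL ℝ).comp T) := by
    refine ⟨1, one_pos, fun u => ?_⟩
    rw [hB, hTapp, inner_add_left, hUsa, real_inner_self_eq_norm_mul_norm,
      real_inner_self_eq_norm_mul_norm]
    nlinarith [mul_self_nonneg ‖Ups u‖]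
  have key : ∀ z, T z = coer.continuousLinearEquivOfBilin z := by
    intro z
    apply ext_inner_right ℝ
    intro w
    rw [coer.continuousLinearEquivOfBilin_apply, hB]
  refine ⟨coer.continuousLinearEquivOfBilin.symm f, ?_, ?_⟩
  · have h := key (coer.continuousLinearEquivOfBilin.symm f)
    rw [hTapp, coer.continuousLinearEquivOfBilin.apply_symm_apply] at h
    exact h
  · intro y hy
    rw [← hTapp, key] at hy
    exact (coer.continuousLinearEquivOfBilin.symm_apply_eq.mpr hy.symm).symm
end aux

/-- With `Λ(x,u) = x − Υu`, `Λ* : z ↦ (z, −Υz)`, `𝚼(x,u) = (Υx, Υu)` and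
`V(x,u) = (Υ⁻¹x − u, Υu − x)`, one has `Λ*Λ = V ∘ 𝚼` and `ran V = ran Λ*`;
consequently `H × H = ran Λ* ⊕ ker Λ`. -/
theorem stmt_13 {H : Type*} [NormedAddCommGroup H] [InnerProductSpace ℝ H] [CompleteSpace H]
    (A B : H → Set H) (hA : MaximalMonotone A) (hB : MaximalMonotone B)
    (Ups UpsI : H →L[ℝ] H) (τ : ℝ) (hτ : 0 < τ)
    (hUsa : ∀ x y : H, ⟪Ups x, y⟫ = ⟪x, Ups y⟫)
    (hUsm : ∀ x : H, τ * ‖x‖ ^ 2 ≤ ⟪Ups x, x⟫)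
    (hUinv : Ups.comp UpsI = ContinuousLinearMap.id ℝ H ∧
      UpsI.comp Ups = ContinuousLinearMap.id ℝ H)
    (V : WithLp 2 (H × H) →L[ℝ] WithLp 2 (H × H))
    (hV : ∀ x u : H, V (pd x u) = pd (UpsI x - u) (Ups u - x))
    (Lam : WithLp 2 (H × H) → H)
    (hLam : ∀ p : WithLp 2 (H × H),
      Lam p = (WithLp.equiv 2 (H × H) p).1 - Ups (WithLp.equiv 2 (H × H) p).2)
    (Lams : H → WithLp 2 (H × H))
    (hLams : ∀ z : H, Lams z = pd z (-Ups z)) :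
    (∀ p : WithLp 2 (H × H),
      Lams (Lam p) = V (pd (Ups (WithLp.equiv 2 (H × H) p).1)
        (Ups (WithLp.equiv 2 (H × H) p).2))) ∧
    Set.range V = Set.range Lams ∧
    (∀ p : WithLp 2 (H × H), ∃! ab : WithLp 2 (H × H) × WithLp 2 (H × H),
      ab.1 ∈ Set.range Lams ∧ Lam ab.2 = 0 ∧ p = ab.1 + ab.2) := by
  have hIU : ∀ a : H, UpsI (Ups a) = a := fun a => ContinuousLinearMap.ext_iff.mp hUinv.2 a
  have hUI : ∀ a : H, Ups (UpsI a) = a := fun a => ContinuousLinearMap.ext_iff.mp hUinv.1 a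
  refine ⟨?_, ?_, ?_⟩
  · intro p
    set x := (WithLp.equiv 2 (H × H) p).1
    set u := (WithLp.equiv 2 (H × H) p).2
    rw [hLam, hLams, hV]
    congr 1
    · rw [hIU]
    · rw [map_sub, neg_sub]
  · apply Set.eq_of_subset_of_subset
    · rintro q ⟨p, rfl⟩
      rw [← pd_eta p, hV]
      refine ⟨UpsI (WithLp.equiv 2 (H × H) p).1 - (WithLp.equiv 2 (H × H) p).2, ?_⟩
      rw [hLams]
      congr 1
      rw [map_sub, hUI, neg_sub]
    · rintro q ⟨z, rfl⟩
      refine ⟨pd (Ups z) 0, ?_⟩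
      rw [hV, hLams, hIU, map_zero, zero_sub, sub_zero]
  · intro p
    set x := (WithLp.equiv 2 (H × H) p).1 with hx
    set u := (WithLp.equiv 2 (H × H) p).2 with hu
    obtain ⟨z, hz, hzu⟩ := exists_unique_inv Ups hUsa (x - Ups u)
    set w : H := u + Ups z with hw
    refine ⟨(pd z (-Ups z), pd (Ups w) w), ⟨⟨z, hLams z⟩, ?_, ?_⟩, ?_⟩
    · rw [hLam]
      show Ups w - Ups w = 0
      rw [sub_self]
    · rw [pd_add, ← pd_eta p, ← hx, ← hu]
      congr 1
      · rw [hw, map_add]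
        have h3 : z + (Ups u + Ups (Ups z)) = z + Ups (Ups z) + Ups u := by abel
        rw [h3, hz]
        abel
      · rw [hw]; abel
    · rintro ⟨a, b⟩ ⟨⟨z', ha⟩, hb, hsum⟩
      dsimp only at ha hb hsum
      rw [hLams] at ha
      rw [hLam] at hb
      set b1 := (WithLp.equiv 2 (H × H) b).1 with hb1
      set b2 := (WithLp.equiv 2 (H × H) b).2 with hb2
      have hbeq : b1 = Ups b2 := by rwa [sub_eq_zero] at hb
      have hsum' : pd x u = pd (z' + b1) (-Ups z' + b2) := by
        rw [← pd_add, ha, hb1, hb2, pd_eta b, ← hsum, hx, hu]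
        exact pd_eta p
      obtain ⟨h1, h2⟩ := pd_inj hsum'
      have hb2' : b2 = u + Ups z' := by rw [h2]; abel
      have hz' : z' + Ups (Ups z') = x - Ups u := by
        rw [h1, hbeq, hb2', map_add]
        abel
      have hzz : z' = z := hzu z' hz'
      have hww : b2 = w := by rw [hb2', hzz, hw]
      have hq : a = pd z (-Ups z) := by rw [← hzz]; exact ha.symm
      have hbb : b = pd (Ups w) w := by
        rw [← hww, ← hbeq, hb1, hb2]
        exact (pd_eta b).symm
      exact Prod.ext hq hbb
end

section
/- In the setting L = Id, Σ = Υ⁻¹, with W the primal-dual operator and Λ(x,u) = x − Υu, one has Λ ∘ J_W = G ∘ Λ, where G = J_{ΥB} ∘ (2J_{ΥA} − Id) + (Id − J_{ΥA}) is the Douglas–Rachford operator. -/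
open RealInnerProductSpace

/-- In the setting `L = Id`, `Σ = Υ⁻¹`, with `W` the primal-dual operator and
`Λ(x,u) = x − Υu`, one has `Λ ∘ J_W = G ∘ Λ`, where
`G = J_{ΥB} ∘ (2J_{ΥA} − Id) + (Id − J_{ΥA})` is the Douglas–Rachford operator. -/
theorem stmt_14 {H : Type*} [NormedAddCommGroup H] [InnerProductSpace ℝ H] [CompleteSpace H]
    (A B : H → Set H) (hA : MaximalMonotone A) (hB : MaximalMonotone B)
    (Ups UpsI : H →L[ℝ] H) (τ : ℝ) (hτ : 0 < τ)
    (hUsa : ∀ x y : H, ⟪Ups x, y⟫ = ⟪x, Ups y⟫)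
    (hUsm : ∀ x : H, τ * ‖x‖ ^ 2 ≤ ⟪Ups x, x⟫)
    (hUinv : Ups.comp UpsI = ContinuousLinearMap.id ℝ H ∧
      UpsI.comp Ups = ContinuousLinearMap.id ℝ H)
    (V : WithLp 2 (H × H) →L[ℝ] WithLp 2 (H × H))
    (hV : ∀ x u : H, V (pd x u) = pd (UpsI x - u) (Ups u - x))
    (M : WithLp 2 (H × H) → Set (WithLp 2 (H × H)))
    (hM : ∀ x u : H, M (pd x u) =
      {yv : WithLp 2 (H × H) |
        (WithLp.equiv 2 (H × H) yv).1 - u ∈ A x ∧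
        u ∈ B ((WithLp.equiv 2 (H × H) yv).2 + x)})
    (W : WithLp 2 (H × H) → Set (WithLp 2 (H × H)))
    (hW : ∀ pq : WithLp 2 (H × H), W pq = {yv : WithLp 2 (H × H) | V yv ∈ M pq})
    (JW : WithLp 2 (H × H) → WithLp 2 (H × H))
    (hJW : ∀ z pq : WithLp 2 (H × H), JW z = pq ↔ z - pq ∈ W pq)
    (JA : H → H) (hJA : ∀ z p : H, JA z = p ↔ UpsI (z - p) ∈ A p)
    (JB : H → H) (hJB : ∀ z q : H, JB z = q ↔ UpsI (z - q) ∈ B q) :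
    ∀ p : WithLp 2 (H × H),
      (WithLp.equiv 2 (H × H) (JW p)).1 - Ups (WithLp.equiv 2 (H × H) (JW p)).2 =
        JB ((2:ℝ) • JA ((WithLp.equiv 2 (H × H) p).1 - Ups (WithLp.equiv 2 (H × H) p).2)
              - ((WithLp.equiv 2 (H × H) p).1 - Ups (WithLp.equiv 2 (H × H) p).2))
          + (((WithLp.equiv 2 (H × H) p).1 - Ups (WithLp.equiv 2 (H × H) p).2)
              - JA ((WithLp.equiv 2 (H × H) p).1 - Ups (WithLp.equiv 2 (H × H) p).2)) := by

  intro p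
  obtain ⟨hUI1, hUI2⟩ := hUinv
  have hUIU : ∀ z : H, UpsI (Ups z) = z := fun z =>
    congrFun (congrArg DFunLike.coe hUI2) z
  have hUUI : ∀ z : H, Ups (UpsI z) = z := fun z =>
    congrFun (congrArg DFunLike.coe hUI1) z
  set x := (WithLp.equiv 2 (H × H) p).1 with hx
  set u := (WithLp.equiv 2 (H × H) p).2 with hu
  set y := (WithLp.equiv 2 (H × H) (JW p)).1 with hy
  set v := (WithLp.equiv 2 (H × H) (JW p)).2 with hv
  have hmem : p - JW p ∈ W (JW p) := (hJW p (JW p)).mp rfl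
  have hsub : p - JW p = pd (x - y) (u - v) := rfl
  have hpq : JW p = pd y v := rfl
  rw [hW, Set.mem_setOf_eq, hsub, hV, hpq, hM, Set.mem_setOf_eq] at hmem
  simp only [pd, Equiv.apply_symm_apply] at hmem
  obtain ⟨h1, h2⟩ := hmem
  set lam := x - Ups u with hlam
  have hAy : JA lam = y := by
    rw [hJA]
    have : UpsI (lam - y) = UpsI (x - y) - (u - v) - v := by
      simp [hlam, map_sub, hUIU]
      abel
    rw [this]
    exact h1
  have hBq : JB ((2:ℝ) • y - lam) = (2:ℝ) • y - lam - Ups v := by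
    rw [hJB]
    have h3 : UpsI ((2:ℝ) • y - lam - ((2:ℝ) • y - lam - Ups v)) = v := by
      have : (2:ℝ) • y - lam - ((2:ℝ) • y - lam - Ups v) = Ups v := by abel
      rw [this, hUIU]
    rw [h3]
    have : (2:ℝ) • y - lam - Ups v = Ups (u - v) - (x - y) + y := by
      rw [map_sub, hlam, two_smul]
      abel
    rw [this]
    exact h2
  rw [hAy, hBq]
  module
end

section
/- In the Douglas–Rachford setting (L = Id, Σ = Υ⁻¹), with Λ(x,u) = x − Υu, G = J_{ΥB}∘(2J_{ΥA} − Id) + (Id − J_{ΥA}), and T = P_{ran V} ∘ J_W, one has Λ(Fix T) = Fix G. -/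
open RealInnerProductSpace

/-- In the Douglas–Rachford setting (`L = Id`, `Σ = Υ⁻¹`), with `Λ(x,u) = x − Υu`,
`G = J_{ΥB}∘(2J_{ΥA} − Id) + (Id − J_{ΥA})`, and `T = P_{ran V} ∘ J_W`, one has
`Λ(Fix T) = Fix G`. -/
theorem stmt_15 {H : Type*} [NormedAddCommGroup H] [InnerProductSpace ℝ H] [CompleteSpace H]
    (A B : H → Set H) (hA : MaximalMonotone A) (hB : MaximalMonotone B)
    (Ups UpsI : H →L[ℝ] H) (τ : ℝ) (hτ : 0 < τ)
    (hUsa : ∀ x y : H, ⟪Ups x, y⟫ = ⟪x, Ups y⟫)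
    (hUsm : ∀ x : H, τ * ‖x‖ ^ 2 ≤ ⟪Ups x, x⟫)
    (hUinv : Ups.comp UpsI = ContinuousLinearMap.id ℝ H ∧
      UpsI.comp Ups = ContinuousLinearMap.id ℝ H)
    (V : WithLp 2 (H × H) →L[ℝ] WithLp 2 (H × H))
    (hV : ∀ x u : H, V (pd x u) = pd (UpsI x - u) (Ups u - x))
    (M : WithLp 2 (H × H) → Set (WithLp 2 (H × H)))
    (hM : ∀ x u : H, M (pd x u) =
      {yv : WithLp 2 (H × H) |
        (WithLp.equiv 2 (H × H) yv).1 - u ∈ A x ∧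
        u ∈ B ((WithLp.equiv 2 (H × H) yv).2 + x)})
    (W : WithLp 2 (H × H) → Set (WithLp 2 (H × H)))
    (hW : ∀ pq : WithLp 2 (H × H), W pq = {yv : WithLp 2 (H × H) | V yv ∈ M pq})
    (JW : WithLp 2 (H × H) → WithLp 2 (H × H))
    (hJW : ∀ z pq : WithLp 2 (H × H), JW z = pq ↔ z - pq ∈ W pq)
    (JA : H → H) (hJA : ∀ z p : H, JA z = p ↔ UpsI (z - p) ∈ A p)
    (JB : H → H) (hJB : ∀ z q : H, JB z = q ↔ UpsI (z - q) ∈ B q)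
    (P : WithLp 2 (H × H) →L[ℝ] WithLp 2 (H × H))
    (hPmem : ∀ z, P z ∈ Set.range V)
    (hPfix : ∀ z ∈ Set.range V, P z = z)
    (hPorth : ∀ z : WithLp 2 (H × H), ∀ w ∈ Set.range V, ⟪z - P z, w⟫ = 0) :
    (fun p : WithLp 2 (H × H) =>
        (WithLp.equiv 2 (H × H) p).1 - Ups (WithLp.equiv 2 (H × H) p).2) ''
      {p : WithLp 2 (H × H) | p ∈ Set.range V ∧ P (JW p) = p} =
    {z : H | JB ((2:ℝ) • JA z - z) + (z - JA z) = z} := by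
  have hUI1 : ∀ x, Ups (UpsI x) = x := fun x => by
    have := ContinuousLinearMap.ext_iff.1 hUinv.1 x
    simpa using this
  have hUI2 : ∀ x, UpsI (Ups x) = x := fun x => by
    have := ContinuousLinearMap.ext_iff.1 hUinv.2 x
    simpa using this
  have hUIsa : ∀ x y : H, ⟪UpsI x, y⟫ = ⟪x, UpsI y⟫ := fun x y => by
    calc ⟪UpsI x, y⟫ = ⟪UpsI x, Ups (UpsI y)⟫ := by rw [hUI1]
      _ = ⟪Ups (UpsI x), UpsI y⟫ := (hUsa _ _).symm
      _ = ⟪x, UpsI y⟫ := by rw [hUI1]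
  -- the map Λ
  set lam : WithLp 2 (H × H) → H := fun p =>
    (WithLp.equiv 2 (H × H) p).1 - Ups (WithLp.equiv 2 (H × H) p).2 with hlam
  have lam_pd : ∀ a b : H, lam (pd a b) = a - Ups b := fun _ _ => rfl
  have pd_eta : ∀ p : WithLp 2 (H × H),
      pd (WithLp.equiv 2 (H × H) p).1 (WithLp.equiv 2 (H × H) p).2 = p := fun _ => rfl
  have pd_sub : ∀ x u y v : H, pd x u - pd y v = pd (x - y) (u - v) := fun _ _ _ _ => rfl
  -- characterization of the range of V
  have hran : ∀ p, p ∈ Set.range V ↔ ∃ c : H, p = pd (UpsI c) (-c) := by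
    intro p
    constructor
    · rintro ⟨q, rfl⟩
      refine ⟨(WithLp.equiv 2 (H × H) q).1 - Ups (WithLp.equiv 2 (H × H) q).2, ?_⟩
      have hq := hV (WithLp.equiv 2 (H × H) q).1 (WithLp.equiv 2 (H × H) q).2
      rw [pd_eta] at hq
      have h1 : UpsI (WithLp.equiv 2 (H × H) q).1 - (WithLp.equiv 2 (H × H) q).2 =
          UpsI ((WithLp.equiv 2 (H × H) q).1 - Ups (WithLp.equiv 2 (H × H) q).2) := by
        rw [map_sub, hUI2]
      have h2 : Ups (WithLp.equiv 2 (H × H) q).2 - (WithLp.equiv 2 (H × H) q).1 =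
          -((WithLp.equiv 2 (H × H) q).1 - Ups (WithLp.equiv 2 (H × H) q).2) := by
        abel
      rw [hq, h1, h2]
    · rintro ⟨c, rfl⟩
      refine ⟨pd c 0, ?_⟩
      have := hV c 0
      rwa [sub_zero, map_zero, zero_sub] at this
  -- Λ ∘ P = Λ
  have lamP : ∀ z, lam (P z) = lam z := by
    intro z
    obtain ⟨w, hw⟩ := (hran (P z)).1 (hPmem z)
    set z1 := (WithLp.equiv 2 (H × H) z).1 with hz1
    set z2 := (WithLp.equiv 2 (H × H) z).2 with hz2
    have horth : ∀ c : H, ⟪z1 - UpsI w, UpsI c⟫ + ⟪z2 + w, -c⟫ = 0 := by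
      intro c
      have h0 := hPorth z (pd (UpsI c) (-c)) ((hran _).2 ⟨c, rfl⟩)
      rw [hw] at h0
      calc ⟪z1 - UpsI w, UpsI c⟫ + ⟪z2 + w, -c⟫
          = ⟪pd z1 z2 - pd (UpsI w) (-w), pd (UpsI c) (-c)⟫ := by
            rw [pd_sub]; rw [sub_neg_eq_add]; rfl
        _ = 0 := h0
    have hdz : UpsI (z1 - UpsI w) - (z2 + w) = 0 := by
      have h0 := horth (UpsI (z1 - UpsI w) - (z2 + w))
      rw [inner_neg_right, ← hUIsa] at h0
      have h1 : ⟪UpsI (z1 - UpsI w) - (z2 + w), UpsI (z1 - UpsI w) - (z2 + w)⟫ = (0:ℝ) := by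
        rw [inner_sub_left]
        linarith [h0]
      exact inner_self_eq_zero.1 h1
    have hUd : Ups (UpsI (z1 - UpsI w) - (z2 + w)) = 0 := by rw [hdz, map_zero]
    rw [map_sub, hUI1, map_add] at hUd
    have hkey : z1 - Ups z2 = UpsI w + Ups w := by
      have h3 : z1 - Ups z2 - (UpsI w + Ups w) = 0 := by
        rw [← hUd]; abel
      exact sub_eq_zero.1 h3
    have hfin : lam (P z) = UpsI w + Ups w := by
      rw [hw, lam_pd, map_neg, sub_neg_eq_add]
    have lam_def : lam z = z1 - Ups z2 := rfl
    rw [hfin, ← hkey, lam_def]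
  -- resolvent of W computed explicitly
  have hJWf : ∀ z : WithLp 2 (H × H),
      JW z = pd (JA (lam z))
        (UpsI ((2:ℝ) • JA (lam z) - lam z - JB ((2:ℝ) • JA (lam z) - lam z))) := by
    intro z
    set z1 := (WithLp.equiv 2 (H × H) z).1 with hz1
    set z2 := (WithLp.equiv 2 (H × H) z).2 with hz2
    have hlz : lam z = z1 - Ups z2 := rfl
    set w := lam z with hwdef
    set x := JA w with hxdef
    set s := (2:ℝ) • x - w with hsdef
    set q := JB s with hqdef
    set u := UpsI (s - q) with hudef
    rw [hJW, hW]
    have hzz : z - pd x u = pd (z1 - x) (z2 - u) := by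
      rw [← pd_eta z, pd_sub]
    show V (z - pd x u) ∈ M (pd x u)
    rw [hzz, hV, hM]
    constructor
    · show UpsI (z1 - x) - (z2 - u) - u ∈ A x
      have h1 : UpsI (z1 - x) - (z2 - u) - u = UpsI (w - x) := by
        rw [hlz]
        simp only [map_sub, hUI2]
        abel
      rw [h1]
      exact (hJA w x).1 hxdef.symm
    · show u ∈ B (Ups (z2 - u) - (z1 - x) + x)
      have hUu : Ups u = s - q := by rw [hudef, hUI1]
      have h2 : Ups (z2 - u) - (z1 - x) + x = q := by
        rw [map_sub, hUu, hsdef, hlz]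
        module
      rw [h2]
      exact (hJB s q).1 hqdef.symm
  -- Λ ∘ JW = G ∘ Λ
  have hlamJW : ∀ z : WithLp 2 (H × H),
      lam (JW z) = JB ((2:ℝ) • JA (lam z) - lam z) + (lam z - JA (lam z)) := by
    intro z
    rw [hJWf z, lam_pd, hUI1]
    module
  -- surjectivity and injectivity of UpsI + Ups
  have hUIpos : ∀ c : H, 0 ≤ ⟪UpsI c, c⟫ := by
    intro c
    have h1 := hUsm (UpsI c)
    rw [hUI1] at h1
    have h2 : 0 ≤ ⟪c, UpsI c⟫ := le_trans (by positivity) h1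
    rwa [real_inner_comm] at h2
  have hcoer : ∀ c : H, τ * ‖c‖ * ‖c‖ ≤ ⟪UpsI c + Ups c, c⟫ := by
    intro c
    rw [inner_add_left]
    have := hUsm c
    have h2 := hUIpos c
    nlinarith [this, h2, sq_abs (‖c‖)]
  have hTinj : ∀ c c' : H, UpsI c + Ups c = UpsI c' + Ups c' → c = c' := by
    intro c c' hcc
    have h1 := hcoer (c - c')
    have h2 : UpsI (c - c') + Ups (c - c') = 0 := by
      have h4 : (UpsI c + Ups c) - (UpsI c' + Ups c') = 0 := sub_eq_zero.2 hcc
      rw [map_sub, map_sub, ← h4]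
      abel
    rw [h2, inner_zero_left] at h1
    have hnn : ‖c - c'‖ * ‖c - c'‖ = 0 := by
      nlinarith [h1, mul_nonneg (norm_nonneg (c - c')) (norm_nonneg (c - c')), hτ]
    have h3 : ‖c - c'‖ = 0 := mul_self_eq_zero.1 hnn
    rw [← sub_eq_zero]
    exact norm_eq_zero.1 h3
  have hTsurj : ∀ y : H, ∃ c : H, UpsI c + Ups c = y := by
    set T : H →L[ℝ] H := UpsI + Ups with hT
    set Bf : H →L[ℝ] H →L[ℝ] ℝ := (innerSL ℝ).comp T with hBf
    have hBfapp : ∀ v w : H, Bf v w = ⟪T v, w⟫ := fun _ _ => rfl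
    have hco : IsCoercive Bf := by
      refine ⟨τ, hτ, fun c => ?_⟩
      rw [hBfapp]
      exact hcoer c
    have hsharp : ∀ v, InnerProductSpace.continuousLinearMapOfBilin Bf v = T v := fun v =>
      (InnerProductSpace.unique_continuousLinearMapOfBilin Bf
        (fun w => (hBfapp v w).symm)).symm
    intro y
    have hrt := hco.range_eq_top
    have hsur : Function.Surjective (InnerProductSpace.continuousLinearMapOfBilin Bf) :=
      LinearMap.range_eq_top.1 hrt
    obtain ⟨c, hc⟩ := hsur y
    refine ⟨c, ?_⟩
    have : T c = y := by rw [← hsharp c]; exact hc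
    exact this
  -- main argument
  ext y
  simp only [Set.mem_image, Set.mem_setOf_eq]
  constructor
  · rintro ⟨p, ⟨hp1, hp2⟩, rfl⟩
    have h1 : lam p = lam (JW p) := by
      conv_lhs => rw [← hp2]
      exact lamP (JW p)
    rw [hlamJW p] at h1
    exact h1.symm
  · intro hy
    obtain ⟨c, hc⟩ := hTsurj y
    refine ⟨pd (UpsI c) (-c), ⟨(hran _).2 ⟨c, rfl⟩, ?_⟩, ?_⟩
    · -- P (JW p) = p
      have hlampc : lam (pd (UpsI c) (-c)) = y := by
        rw [lam_pd, map_neg, sub_neg_eq_add, hc]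
      obtain ⟨c', hc'⟩ := (hran _).1 (hPmem (JW (pd (UpsI c) (-c))))
      have h2 : lam (P (JW (pd (UpsI c) (-c)))) = y := by
        rw [lamP, hlamJW, hlampc, hy]
      rw [hc', lam_pd, map_neg, sub_neg_eq_add] at h2
      have h3 : c' = c := hTinj c' c (by rw [h2, hc])
      rw [hc', h3]
    · rw [lam_pd, map_neg, sub_neg_eq_add, hc]
end

section
/- Let f ∈ Γ₀(H) and Υ : H → H strongly monotone self-adjoint bounded linear. Then prox_f^Υ := argmin_y (f(y) + ½‖· − y‖_Υ²) satisfies prox_f^Υ = Id − Υ⁻¹ ∘ prox_{f*}^{Υ⁻¹} ∘ Υ, where f* is the Fenchel conjugate and ‖x‖_Υ² = ⟨x, Υx⟩. -/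
open RealInnerProductSpace

/-- Moreau decomposition in the metric induced by `Υ`: for `f ∈ Γ₀(H)` and `Υ`
strongly monotone self-adjoint bounded linear,
`prox_f^Υ = Id − Υ⁻¹ ∘ prox_{f*}^{Υ⁻¹} ∘ Υ`, where `prox_f^Υ x` is the unique
minimizer of `y ↦ f y + ½⟪x − y, Υ(x − y)⟫` and `f*` is the Fenchel conjugate. -/
theorem stmt_19 {H : Type*} [NormedAddCommGroup H] [InnerProductSpace ℝ H] [CompleteSpace H]
    (f : H → EReal)
    (hproper : (∃ x, f x ≠ ⊤) ∧ (∀ x, f x ≠ ⊥))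
    (hconv : ∀ x y : H, ∀ a b : ℝ, 0 ≤ a → 0 ≤ b → a + b = 1 →
      f (a • x + b • y) ≤ (a : EReal) * f x + (b : EReal) * f y)
    (hlsc : LowerSemicontinuous f)
    (fs : H → EReal)
    (hfs : ∀ u : H, fs u = ⨆ x : H, ((⟪x, u⟫ : ℝ) : EReal) - f x)
    (Ups UpsI : H →L[ℝ] H) (τ : ℝ) (hτ : 0 < τ)
    (hUsa : ∀ x y : H, ⟪Ups x, y⟫ = ⟪x, Ups y⟫)
    (hUsm : ∀ x : H, τ * ‖x‖ ^ 2 ≤ ⟪Ups x, x⟫)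
    (hUinv : Ups.comp UpsI = ContinuousLinearMap.id ℝ H ∧
      UpsI.comp Ups = ContinuousLinearMap.id ℝ H)
    (proxf : H → H)
    (hproxf : ∀ x y : H,
      f (proxf x) + (((1/2) * ⟪x - proxf x, Ups (x - proxf x)⟫ : ℝ) : EReal)
        ≤ f y + (((1/2) * ⟪x - y, Ups (x - y)⟫ : ℝ) : EReal))
    (proxfs : H → H)
    (hproxfs : ∀ x y : H,
      fs (proxfs x) + (((1/2) * ⟪x - proxfs x, UpsI (x - proxfs x)⟫ : ℝ) : EReal)
        ≤ fs y + (((1/2) * ⟪x - y, UpsI (x - y)⟫ : ℝ) : EReal)) :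
    ∀ x : H, proxf x = x - UpsI (proxfs (Ups x)) := by
  obtain ⟨⟨x₀, hx₀⟩, hbot⟩ := hproper
  -- inverse relations
  have hIU : ∀ z : H, UpsI (Ups z) = z := fun z => by
    simpa using ContinuousLinearMap.ext_iff.mp hUinv.2 z
  have hUI : ∀ z : H, Ups (UpsI z) = z := fun z => by
    simpa using ContinuousLinearMap.ext_iff.mp hUinv.1 z
  -- self-adjointness of UpsI
  have hUIsa : ∀ a b : H, ⟪UpsI a, b⟫ = ⟪a, UpsI b⟫ := by
    intro a b
    calc ⟪UpsI a, b⟫ = ⟪UpsI a, Ups (UpsI b)⟫ := by rw [hUI]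
    _ = ⟪Ups (UpsI a), UpsI b⟫ := (hUsa _ _).symm
    _ = ⟪a, UpsI b⟫ := by rw [hUI]
  -- nonnegativity
  have hUpos : ∀ z : H, 0 ≤ ⟪z, Ups z⟫ := by
    intro z
    have h1 := hUsm z
    have h2 : (0:ℝ) ≤ τ * ‖z‖ ^ 2 := by positivity
    rw [real_inner_comm] at h1
    linarith
  have hUIstrict : ∀ z : H, ⟪z, UpsI z⟫ ≤ 0 → z = 0 := by
    intro z hz
    have h1 := hUsm (UpsI z)
    rw [hUI] at h1
    have hcomm : ⟪UpsI z, z⟫ = ⟪z, UpsI z⟫ := real_inner_comm _ _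
    have h2 : ‖UpsI z‖ ^ 2 ≤ 0 := by nlinarith
    have h3 : UpsI z = 0 := by
      have := sq_nonneg ‖UpsI z‖
      have : ‖UpsI z‖ = 0 := by nlinarith
      simpa using this
    have := hUI z
    rw [h3] at this
    simpa using this.symm
  -- quadratic expansion
  have expand : ∀ (T : H →L[ℝ] H), (∀ a b : H, ⟪T a, b⟫ = ⟪a, T b⟫) →
      ∀ (a d : H) (t : ℝ),
      ⟪a - t • d, T (a - t • d)⟫ = ⟪a, T a⟫ - 2*t*⟪d, T a⟫ + t^2*⟪d, T d⟫ := by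
    intro T hT a d t
    have hcross : ⟪a, T d⟫ = ⟪d, T a⟫ := by
      rw [← hT a d, real_inner_comm]
    simp only [map_sub, map_smul, inner_sub_left, inner_sub_right,
      real_inner_smul_left, real_inner_smul_right, hcross]
    ring
  intro x
  set p := proxf x with hp
  set w := Ups x - Ups p with hw
  have hwup : Ups (x - p) = w := by rw [map_sub]
  -- f p is real
  have hfptop : f p ≠ ⊤ := by
    intro htop
    have h := hproxf x x₀
    rw [← hp] at h
    rw [htop, EReal.top_add_coe] at h
    obtain hx₀' := EReal.coe_toReal hx₀ (hbot x₀)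
    rw [← hx₀', ← EReal.coe_add] at h
    exact (EReal.coe_lt_top _).not_ge h
  set Fp : ℝ := (f p).toReal with hFpdef
  have hFp : f p = (Fp : EReal) := (EReal.coe_toReal hfptop (hbot p)).symm
  -- subgradient inequality (real form, for y with f y real)
  have hsubR : ∀ (y : H) (Fy : ℝ), f y = (Fy : EReal) → Fp + ⟪w, y - p⟫ ≤ Fy := by
    intro y Fy hFy
    set d := y - p with hd
    set c := ⟪d, Ups d⟫ with hc
    have hc0 : 0 ≤ c := hUpos d
    have hstep : ∀ t : ℝ, 0 < t → t ≤ 1 → Fp + ⟪w, d⟫ ≤ Fy + (t/2)*c := by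
      intro t ht0 ht1
      set yt := p + t • d with hyt
      -- convexity bound
      have hconv1 := hconv p y (1-t) t (by linarith) ht0.le (by ring)
      have hco : (1-t) • p + t • y = yt := by
        rw [hyt, hd]; module
      rw [hco, hFy, hFp] at hconv1
      have hconv2 : f yt ≤ (((1-t)*Fp + t*Fy : ℝ) : EReal) := by
        refine le_of_le_of_eq hconv1 ?_
        norm_cast
      have hyttop : f yt ≠ ⊤ := fun h => by
        rw [h] at hconv2; exact (EReal.coe_lt_top _).not_ge hconv2
      set Fyt : ℝ := (f yt).toReal with hFytdef
      have hFyt : f yt = (Fyt : EReal) := (EReal.coe_toReal hyttop (hbot yt)).symm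
      have hFytle : Fyt ≤ (1-t)*Fp + t*Fy := by
        rw [hFyt] at hconv2; exact_mod_cast hconv2
      -- prox inequality at yt
      have hpro := hproxf x yt
      rw [← hp, hFp, hFyt, ← EReal.coe_add, ← EReal.coe_add] at hpro
      have hproR : Fp + 1/2 * ⟪x - p, Ups (x - p)⟫
          ≤ Fyt + 1/2 * ⟪x - yt, Ups (x - yt)⟫ := by exact_mod_cast hpro
      -- expansion
      have hxyt : x - yt = (x - p) - t • d := by rw [hyt]; abel
      have hexp : ⟪x - yt, Ups (x - yt)⟫
          = ⟪x - p, Ups (x - p)⟫ - 2*t*⟪d, Ups (x - p)⟫ + t^2*c := by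
        rw [hxyt]; exact expand Ups hUsa (x - p) d t
      have hwd : ⟪d, Ups (x - p)⟫ = ⟪w, d⟫ := by
        rw [hwup]; exact real_inner_comm _ _
      rw [hexp, hwd] at hproR
      have hmul : t * (Fp + ⟪w, d⟫) ≤ t * (Fy + (t/2)*c) := by nlinarith
      exact le_of_mul_le_mul_left hmul ht0
    by_contra hcon
    push_neg at hcon
    set ε := Fp + ⟪w, d⟫ - Fy with hε
    have hε0 : 0 < ε := by simp [hε]; linarith
    set t := min 1 (ε/(c+1)) with ht
    have ht0 : 0 < t := lt_min one_pos (by positivity)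
    have ht1 : t ≤ 1 := min_le_left _ _
    have htc : t ≤ ε/(c+1) := min_le_right _ _
    have := hstep t ht0 ht1
    have hcc : t * c ≤ ε/(c+1) * c := mul_le_mul_of_nonneg_right htc hc0
    have h2 : ε/(c+1) * c < ε := by
      rw [div_mul_eq_mul_div, div_lt_iff₀ (by linarith)]
      nlinarith
    linarith
  -- subgradient inequality, EReal form
  have hsub : ∀ y : H, (((Fp + ⟪w, y - p⟫ : ℝ)) : EReal) ≤ f y := by
    intro y
    rcases eq_or_ne (f y) ⊤ with h | h
    · rw [h]; exact le_top
    · have hFy := (EReal.coe_toReal h (hbot y)).symm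
      rw [hFy]
      exact_mod_cast hsubR y _ hFy
  -- Fenchel-Young for fs
  have hFY : ∀ (y u : H), ((⟪y, u⟫ : ℝ) : EReal) - f y ≤ fs u := by
    intro y u
    rw [hfs u]
    exact le_iSup (fun y => ((⟪y, u⟫ : ℝ) : EReal) - f y) y
  have hFYp : ∀ u : H, (((⟪p, u⟫ - Fp : ℝ)) : EReal) ≤ fs u := by
    intro u
    have := hFY p u
    rw [hFp] at this
    rw [EReal.coe_sub]
    exact this
  -- value of fs at w
  have hfsw : fs w = (((⟪p, w⟫ - Fp : ℝ)) : EReal) := by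
    refine le_antisymm ?_ (hFYp w)
    rw [hfs w]
    apply iSup_le
    intro y
    rcases eq_or_ne (f y) ⊤ with h | h
    · rw [h]
      simp
    · have hFy := (EReal.coe_toReal h (hbot y)).symm
      rw [hFy, ← EReal.coe_sub]
      have h1 := hsubR y _ hFy
      have h2 : ⟪y, w⟫ - (f y).toReal ≤ ⟪p, w⟫ - Fp := by
        have hwsplit : ⟪w, y - p⟫ = ⟪y, w⟫ - ⟪p, w⟫ := by
          rw [inner_sub_right, real_inner_comm w y, real_inner_comm w p]
        rw [hwsplit] at h1
        linarith
      exact_mod_cast h2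
  -- fs q is real
  set q := proxfs (Ups x) with hq
  have hQw : Ups x - w = Ups p := by rw [hw]; abel
  have hq1 := hproxfs (Ups x) w
  rw [← hq, hfsw, hQw, hIU, ← EReal.coe_add] at hq1
  have hqtop : fs q ≠ ⊤ := by
    intro h
    rw [h, EReal.top_add_coe] at hq1
    exact (EReal.coe_lt_top _).not_ge hq1
  have hqbot : fs q ≠ ⊥ := by
    intro h
    have := hFYp q
    rw [h] at this
    exact (EReal.bot_lt_coe _).not_ge this
  set S : ℝ := (fs q).toReal with hSdef
  have hS : fs q = (S : EReal) := (EReal.coe_toReal hqtop hqbot).symm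
  rw [hS, ← EReal.coe_add] at hq1
  have hq1R : S + 1/2 * ⟪Ups x - q, UpsI (Ups x - q)⟫
      ≤ ⟪p, w⟫ - Fp + 1/2 * ⟪Ups p, p⟫ := by exact_mod_cast hq1
  have hSge : ⟪p, q⟫ - Fp ≤ S := by
    have := hFYp q
    rw [hS] at this
    exact_mod_cast this
  -- algebra: q = w
  have hqw : q = w := by
    set e := q - w with he
    have hxq : Ups x - q = Ups p - (1:ℝ) • e := by
      rw [he, hw]; simp; abel
    have hexp2 : ⟪Ups x - q, UpsI (Ups x - q)⟫
        = ⟪Ups p, UpsI (Ups p)⟫ - 2*1*⟪e, UpsI (Ups p)⟫ + 1^2*⟪e, UpsI e⟫ := by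
      rw [hxq]; exact expand UpsI hUIsa (Ups p) e 1
    rw [hIU] at hexp2
    have hip : ⟪e, p⟫ = ⟪p, q⟫ - ⟪p, w⟫ := by
      rw [he, inner_sub_left, real_inner_comm q p, real_inner_comm w p]
    have hpUp : ⟪Ups p, UpsI (Ups p)⟫ = ⟪Ups p, p⟫ := by rw [hIU]
    have heneg : ⟪e, UpsI e⟫ ≤ 0 := by
      rw [hexp2] at hq1R
      linarith [hq1R, hip, hSge]
    have : e = 0 := hUIstrict e heneg
    have := sub_eq_zero.mp (he ▸ this)
    exact this
  -- conclude
  rw [hqw, hw, ← map_sub, hIU]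
  abel
end
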